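/- arXiv:1307.7159 — 9 statements merged into one kernel-verified Lean document; each statement's English description precedes it below -/
import Mathlib

section
/- Let R be a finite Frobenius ring with generating character χ, and let 𝒫 = (P_1,…,P_M) be a partition of R^n. For a partition 𝒬 = (Q_1,…,Q_K) of R^n, its left χ-dual partition 𝒬̂^[χ,l] is the partition of R^n given by the equivalence relation v ∼ v' iff ∑_{w∈Q_k} χ(⟨w,v⟩) = ∑_{w∈Q_k} χ(⟨w,v'⟩) for all k, and its right χ-dual 𝒬̂^[χ,r] is given by v ∼ v' iff ∑_{w∈Q_k} χ(⟨v,w⟩) = ∑_{w∈Q_k} χ(⟨v',w⟩) for all k. Then: (1) the right χ-dual of the left χ-dual of 𝒫 equals the left χ-dual of the right χ-dual of 𝒫 (i.e., for all v,v' ∈ R^n, v and v' are equivalent in the former partition if and only if they are equivalent in the latter); (2) 𝒫 equals its left χ-dual partition if and only if 𝒫 equals its right χ-dual partition. -/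
open Matrix
open scoped Classical

noncomputable section

/-- `χ` is a generating character of the finite ring `R`: the map sending `r` to the
additive character `x ↦ χ (x * r)` is a bijection from `R` onto the additive characters
of `R`. -/
def IsGeneratingChar {R : Type*} [Ring R] [Fintype R] (χ : AddChar R ℂ) : Prop :=
  ∀ ψ : AddChar R ℂ, ∃! r : R, ∀ x : R, ψ x = χ (x * r)

variable {R : Type*} [Ring R] [Fintype R] {n : ℕ}

/-- The sum `∑_{w ∈ S} χ ⟨w, v⟩`. -/
def sumL (χ : AddChar R ℂ) (S : Set (Fin n → R)) (v : Fin n → R) : ℂ :=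
  ∑ w ∈ S.toFinite.toFinset, χ (w ⬝ᵥ v)

/-- The sum `∑_{w ∈ S} χ ⟨v, w⟩`. -/
def sumR (χ : AddChar R ℂ) (S : Set (Fin n → R)) (v : Fin n → R) : ℂ :=
  ∑ w ∈ S.toFinite.toFinset, χ (v ⬝ᵥ w)

/-- The equivalence relation defining the left `χ`-dual partition of the partition
`P` of `R^n`. -/
def leftDualRel (χ : AddChar R ℂ) {ι : Type*} (P : ι → Set (Fin n → R))
    (v v' : Fin n → R) : Prop :=
  ∀ m : ι, sumL χ (P m) v = sumL χ (P m) v'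

/-- The equivalence relation defining the right `χ`-dual partition of the partition
`P` of `R^n`. -/
def rightDualRel (χ : AddChar R ℂ) {ι : Type*} (P : ι → Set (Fin n → R))
    (v v' : Fin n → R) : Prop :=
  ∀ m : ι, sumR χ (P m) v = sumR χ (P m) v'

set_option linter.unusedSectionVars false
set_option linter.unnecessarySimpa false

namespace Bidual
variable {R : Type*} [Ring R] [Fintype R] {n : ℕ}

lemma conj_char (χ : AddChar R ℂ) (x : R) : (starRingEnd ℂ) (χ x) = χ (-x) := by
  have hpow : χ x ^ Fintype.card R = 1 := by
    rw [← AddChar.map_nsmul_eq_pow, card_nsmul_eq_zero, AddChar.map_zero_eq_one]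
  have hnorm : ‖χ x‖ = 1 := Complex.norm_eq_one_of_pow_eq_one hpow Fintype.card_ne_zero
  rw [AddChar.map_neg_eq_inv, Complex.inv_eq_conj hnorm]

lemma nondeg_left (χ : AddChar R ℂ) (hχ : IsGeneratingChar χ) {r : R}
    (h : ∀ x : R, χ (x * r) = 1) : r = 0 := by
  obtain ⟨t, -, huniq⟩ := hχ 1
  have h1 : r = t := huniq r (fun x => by rw [AddChar.one_apply, h x])
  have h2 : (0 : R) = t := huniq 0 (fun x => by simp)
  rw [h1, ← h2]

lemma nondeg_right (χ : AddChar R ℂ) (hχ : IsGeneratingChar χ) {r : R}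
    (h : ∀ y : R, χ (r * y) = 1) : r = 0 := by
  apply nondeg_left χ hχ
  intro x
  obtain ⟨t, ht, -⟩ := hχ (χ.compAddMonoidHom (AddMonoidHom.mulLeft x))
  have hr := ht r
  simp only [AddChar.compAddMonoidHom_apply, AddMonoidHom.coe_mulLeft] at hr
  rw [hr, h t]

def ind (S : Set (Fin n → R)) : (Fin n → R) → ℂ := fun w => if w ∈ S then 1 else 0

structure IsPairing (χ : AddChar R ℂ) (B : (Fin n → R) → (Fin n → R) → R) : Prop where
  addl : ∀ w w' v, B (w + w') v = B w v + B w' v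
  addr : ∀ w v v', B w (v + v') = B w v + B w v'
  ndl : ∀ w, (∀ v, χ (B w v) = 1) → w = 0
  ndr : ∀ v, (∀ w, χ (B w v) = 1) → v = 0

variable {χ : AddChar R ℂ} {B : (Fin n → R) → (Fin n → R) → R}

lemma IsPairing.swap (hB : IsPairing χ B) : IsPairing χ (Function.swap B) :=
  ⟨fun w w' v => hB.addr v w w', fun w v v' => hB.addl v v' w, hB.ndr, hB.ndl⟩

lemma IsPairing.zerol (hB : IsPairing χ B) (v : Fin n → R) : B 0 v = 0 := by
  have := hB.addl 0 0 v; simpa using this.symm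

lemma IsPairing.zeror (hB : IsPairing χ B) (w : Fin n → R) : B w 0 = 0 := by
  have := hB.addr w 0 0; simpa using this.symm

lemma IsPairing.negl (hB : IsPairing χ B) (w v : Fin n → R) : B (-w) v = -(B w v) := by
  have h := hB.addl w (-w) v
  rw [add_neg_cancel, hB.zerol] at h
  exact (neg_eq_of_add_eq_zero_right h.symm).symm

/-- The Fourier transform associated to the pairing `B`. -/
def Fb (χ : AddChar R ℂ) (B : (Fin n → R) → (Fin n → R) → R) :
    ((Fin n → R) → ℂ) →ₗ[ℂ] ((Fin n → R) → ℂ) where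
  toFun f := fun v => ∑ w : Fin n → R, f w * χ (B w v)
  map_add' f g := by funext v; simp [add_mul, Finset.sum_add_distrib]
  map_smul' c f := by funext v; simp [Finset.mul_sum, mul_assoc]

@[simp] lemma Fb_apply (χ : AddChar R ℂ) (B : (Fin n → R) → (Fin n → R) → R)
    (f : (Fin n → R) → ℂ) (v : Fin n → R) :
    Fb χ B f v = ∑ w : Fin n → R, f w * χ (B w v) := rfl

def sumB (χ : AddChar R ℂ) (B : (Fin n → R) → (Fin n → R) → R) (S : Set (Fin n → R))
    (v : Fin n → R) : ℂ :=
  ∑ w ∈ S.toFinite.toFinset, χ (B w v)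

lemma sumB_eq_Fb (χ : AddChar R ℂ) (B : (Fin n → R) → (Fin n → R) → R)
    (S : Set (Fin n → R)) (v : Fin n → R) : sumB χ B S v = Fb χ B (ind S) v := by
  rw [sumB, Fb_apply]
  simp only [ind, ite_mul, one_mul, zero_mul]
  rw [← Finset.sum_filter]
  apply Finset.sum_congr _ (fun _ _ => rfl)
  ext w
  simp [Set.Finite.mem_toFinset]

def dualRelB (χ : AddChar R ℂ) (B : (Fin n → R) → (Fin n → R) → R) {ι : Type*}
    (P : ι → Set (Fin n → R)) (v v' : Fin n → R) : Prop :=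
  ∀ m, sumB χ B (P m) v = sumB χ B (P m) v'

lemma dualRelB_refl {ι : Type*} (P : ι → Set (Fin n → R)) (v : Fin n → R) :
    dualRelB χ B P v v := fun _ => rfl

lemma dualRelB_symm {ι : Type*} {P : ι → Set (Fin n → R)} {v v' : Fin n → R}
    (h : dualRelB χ B P v v') : dualRelB χ B P v' v := fun m => (h m).symm

lemma dualRelB_trans {ι : Type*} {P : ι → Set (Fin n → R)} {v v' v'' : Fin n → R}
    (h : dualRelB χ B P v v') (h' : dualRelB χ B P v' v'') : dualRelB χ B P v v'' :=
  fun m => (h m).trans (h' m)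

lemma sum_char (hB : IsPairing χ B) (w : Fin n → R) :
    ∑ v : Fin n → R, χ (B w v) = if w = 0 then (Fintype.card (Fin n → R) : ℂ) else 0 := by
  by_cases hw : w = 0
  · simp [hw, hB.zerol, Finset.card_univ]
  · rw [if_neg hw]
    let ψ : AddChar (Fin n → R) ℂ :=
      { toFun := fun v => χ (B w v)
        map_zero_eq_one' := by show χ (B w 0) = 1; rw [hB.zeror]; exact χ.map_zero_eq_one
        map_add_eq_mul' := fun a b => by
          show χ (B w (a + b)) = χ (B w a) * χ (B w b)
          rw [hB.addr, AddChar.map_add_eq_mul] }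
    have hψ : ψ ≠ 0 := by
      intro h0
      exact hw (hB.ndl w (fun v => by
        have := DFunLike.congr_fun h0 v
        simpa [ψ] using this))
    have := AddChar.sum_eq_ite ψ
    rw [if_neg hψ] at this
    exact this

lemma inversion (hB : IsPairing χ B) (f : (Fin n → R) → ℂ) (v : Fin n → R) :
    Fb χ (Function.swap B) (Fb χ B f) v = (Fintype.card (Fin n → R) : ℂ) * f (-v) := by
  rw [Fb_apply]
  have step1 : ∀ u : Fin n → R, (Fb χ B f u) * χ (Function.swap B u v)
      = ∑ w : Fin n → R, f w * χ (B (w + v) u) := by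
    intro u
    rw [Fb_apply, Finset.sum_mul]
    refine Finset.sum_congr rfl fun w _ => ?_
    rw [mul_assoc, ← AddChar.map_add_eq_mul, hB.addl]
  rw [Finset.sum_congr rfl (fun u _ => step1 u), Finset.sum_comm]
  have step2 : ∀ w : Fin n → R, ∑ u : Fin n → R, f w * χ (B (w + v) u)
      = if w = -v then f w * (Fintype.card (Fin n → R) : ℂ) else 0 := by
    intro w
    rw [← Finset.mul_sum, sum_char hB]
    by_cases hw : w = -v
    · rw [if_pos (by rw [hw]; abel), if_pos hw]
    · rw [if_neg (fun h => hw (eq_neg_of_add_eq_zero_left h)), if_neg hw, mul_zero]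
  rw [Finset.sum_congr rfl (fun w _ => step2 w), Finset.sum_ite_eq' Finset.univ (-v)]
  simp [mul_comm]

lemma Fb_inj (hB : IsPairing χ B) : Function.Injective (Fb χ B) := by
  intro f g h
  funext x
  have h2 := congrArg (fun F => Fb χ (Function.swap B) F (-x)) h
  simp only [inversion hB, neg_neg] at h2
  have hN : ((Fintype.card (Fin n → R) : ℂ)) ≠ 0 := by
    simpa using Fintype.card_ne_zero (α := Fin n → R)
  exact mul_left_cancel₀ hN h2

def conv (f g : (Fin n → R) → ℂ) : (Fin n → R) → ℂ := fun v => ∑ w, f w * g (v - w)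

lemma Fb_conv (hB : IsPairing χ B) (f g : (Fin n → R) → ℂ) :
    Fb χ B (conv f g) = Fb χ B f * Fb χ B g := by
  funext v
  rw [Pi.mul_apply, Fb_apply, Fb_apply, Fb_apply]
  have key : ∀ w, ∑ u : Fin n → R, g (u - w) * χ (B u v)
      = (∑ t : Fin n → R, g t * χ (B t v)) * χ (B w v) := by
    intro w
    rw [Finset.sum_mul]
    refine Fintype.sum_equiv (Equiv.subRight w) _ _ (fun u => ?_)
    simp only [Equiv.subRight_apply]
    have hu : B u v = B (u - w) v + B w v := by
      have h2 := hB.addl (u - w) w v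
      rw [sub_add_cancel] at h2
      exact h2
    rw [hu, AddChar.map_add_eq_mul]
    ring
  calc ∑ u : Fin n → R, conv f g u * χ (B u v)
      = ∑ u : Fin n → R, ∑ w : Fin n → R, f w * (g (u - w) * χ (B u v)) := by
        refine Finset.sum_congr rfl fun u _ => ?_
        rw [conv, Finset.sum_mul]
        exact Finset.sum_congr rfl fun w _ => by ring
    _ = ∑ w : Fin n → R, f w * ∑ u : Fin n → R, g (u - w) * χ (B u v) := by
        rw [Finset.sum_comm]
        exact Finset.sum_congr rfl fun w _ => by rw [Finset.mul_sum]
    _ = ∑ w : Fin n → R, (f w * χ (B w v)) * (∑ t : Fin n → R, g t * χ (B t v)) := by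
        refine Finset.sum_congr rfl fun w _ => ?_
        rw [key]; ring
    _ = _ := by rw [← Finset.sum_mul]

def delta : (Fin n → R) → ℂ := fun v => if v = 0 then 1 else 0

lemma Fb_delta (hB : IsPairing χ B) : Fb χ B delta = 1 := by
  funext v
  rw [Fb_apply]
  simp only [delta, ite_mul, one_mul, zero_mul, Finset.sum_ite_eq', Finset.mem_univ, if_pos]
  simp [hB.zerol]

def Wb (χ : AddChar R ℂ) (B : (Fin n → R) → (Fin n → R) → R) {ι : Type*}
    (P : ι → Set (Fin n → R)) : Submodule ℂ ((Fin n → R) → ℂ) where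
  carrier := {f | ∀ v v', dualRelB χ B P v v' → f v = f v'}
  add_mem' := fun {f g} hf hg v v' h => by simp only [Pi.add_apply, hf v v' h, hg v v' h]
  zero_mem' := fun v v' _ => rfl
  smul_mem' := fun c f hf v v' h => by simp only [Pi.smul_apply, hf v v' h]

lemma mem_Wb {χ : AddChar R ℂ} {B : (Fin n → R) → (Fin n → R) → R} {ι : Type*}
    {P : ι → Set (Fin n → R)} {f : (Fin n → R) → ℂ} :
    f ∈ Wb χ B P ↔ ∀ v v', dualRelB χ B P v v' → f v = f v' := Iff.rfl

lemma mul_mem_Wb {χ : AddChar R ℂ} {B : (Fin n → R) → (Fin n → R) → R} {ι : Type*}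
    {P : ι → Set (Fin n → R)} {f g : (Fin n → R) → ℂ}
    (hf : f ∈ Wb χ B P) (hg : g ∈ Wb χ B P) : f * g ∈ Wb χ B P :=
  fun v v' h => by simp only [Pi.mul_apply, hf v v' h, hg v v' h]

def Usub {ι : Type*} (P : ι → Set (Fin n → R)) : Submodule ℂ ((Fin n → R) → ℂ) where
  carrier := {f | ∀ v v', (∃ m, v ∈ P m ∧ v' ∈ P m) → f v = f v'}
  add_mem' := fun {f g} hf hg v v' h => by simp only [Pi.add_apply, hf v v' h, hg v v' h]
  zero_mem' := fun v v' _ => rfl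
  smul_mem' := fun c f hf v v' h => by simp only [Pi.smul_apply, hf v v' h]

lemma mem_Usub {ι : Type*} {P : ι → Set (Fin n → R)} {f : (Fin n → R) → ℂ} :
    f ∈ Usub P ↔ ∀ v v', (∃ m, v ∈ P m ∧ v' ∈ P m) → f v = f v' := Iff.rfl

def Dsub (χ : AddChar R ℂ) (B : (Fin n → R) → (Fin n → R) → R) {ι : Type*}
    (P : ι → Set (Fin n → R)) : Submodule ℂ ((Fin n → R) → ℂ) :=
  (Wb χ B P).comap (Fb χ B) ⊓ (Wb χ (Function.swap B) P).comap (Fb χ (Function.swap B))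

lemma Dsub_swap (χ : AddChar R ℂ) (B : (Fin n → R) → (Fin n → R) → R) {ι : Type*}
    (P : ι → Set (Fin n → R)) : Dsub χ (Function.swap B) P = Dsub χ B P := by
  have h : Function.swap (Function.swap B) = B := rfl
  rw [Dsub, Dsub, h, inf_comm]

variable {ι : Type*} {P : ι → Set (Fin n → R)}

lemma ind_mem_Dsub (m : ι) : ind (P m) ∈ Dsub χ B P := by
  constructor
  · intro v v' h
    rw [← sumB_eq_Fb, ← sumB_eq_Fb]
    exact h m
  · intro v v' h
    rw [← sumB_eq_Fb, ← sumB_eq_Fb]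
    exact h m

lemma delta_mem_Dsub (hB : IsPairing χ B) : delta ∈ Dsub χ B (P := P) := by
  constructor
  · show Fb χ B delta ∈ Wb χ B P
    rw [Fb_delta hB]
    intro v v' _; rfl
  · show Fb χ (Function.swap B) delta ∈ Wb χ (Function.swap B) P
    rw [Fb_delta hB.swap]
    intro v v' _; rfl

lemma conv_mem_Dsub (hB : IsPairing χ B) {f g : (Fin n → R) → ℂ}
    (hf : f ∈ Dsub χ B P) (hg : g ∈ Dsub χ B P) : conv f g ∈ Dsub χ B P := by
  constructor
  · show Fb χ B (conv f g) ∈ Wb χ B P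
    rw [Fb_conv hB]
    exact mul_mem_Wb hf.1 hg.1
  · show Fb χ (Function.swap B) (conv f g) ∈ Wb χ (Function.swap B) P
    rw [Fb_conv hB.swap]
    exact mul_mem_Wb hf.2 hg.2

lemma one_mem_map (hB : IsPairing χ B) :
    (1 : (Fin n → R) → ℂ) ∈ (Dsub χ B P).map (Fb χ B) :=
  ⟨delta, delta_mem_Dsub hB, Fb_delta hB⟩

lemma mul_mem_map (hB : IsPairing χ B) {f g : (Fin n → R) → ℂ}
    (hf : f ∈ (Dsub χ B P).map (Fb χ B)) (hg : g ∈ (Dsub χ B P).map (Fb χ B)) :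
    f * g ∈ (Dsub χ B P).map (Fb χ B) := by
  obtain ⟨d, hd, rfl⟩ := hf
  obtain ⟨d', hd', rfl⟩ := hg
  exact ⟨conv d d', conv_mem_Dsub hB hd hd', (Fb_conv hB d d').symm ▸ rfl⟩

def eclass (χ : AddChar R ℂ) (B : (Fin n → R) → (Fin n → R) → R) {ι : Type*}
    (P : ι → Set (Fin n → R)) (u : Fin n → R) : (Fin n → R) → ℂ :=
  ind {w | dualRelB χ B P w u}

lemma eclass_mem_map (hB : IsPairing χ B) (u : Fin n → R) :
    eclass χ B P u ∈ (Dsub χ B P).map (Fb χ B) := by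
  classical
  set M := (Dsub χ B P).map (Fb χ B) with hMdef
  have hone : (1 : (Fin n → R) → ℂ) ∈ M := one_mem_map hB
  have key : ∀ w : Fin n → R, ¬ dualRelB χ B P w u →
      ∃ h : (Fin n → R) → ℂ, h ∈ M ∧ (∀ x, dualRelB χ B P x u → h x = 1) ∧ h w = 0 := by
    intro w hw
    rw [dualRelB] at hw
    push_neg at hw
    obtain ⟨m, hm⟩ := hw
    set a := sumB χ B (P m) u with ha
    set b := sumB χ B (P m) w with hb
    have hab : a - b ≠ 0 := sub_ne_zero.mpr (Ne.symm hm)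
    refine ⟨(a - b)⁻¹ • (Fb χ B (ind (P m)) - b • (1 : (Fin n → R) → ℂ)), ?_, ?_, ?_⟩
    · exact Submodule.smul_mem _ _ (Submodule.sub_mem _ ⟨ind (P m), ind_mem_Dsub m, rfl⟩
        (Submodule.smul_mem _ _ hone))
    · intro x hx
      have hxa : Fb χ B (ind (P m)) x = a := by rw [← sumB_eq_Fb]; exact hx m
      simp only [Pi.smul_apply, Pi.sub_apply, Pi.one_apply, hxa, smul_eq_mul, mul_one]
      rw [inv_mul_cancel₀ hab]
    · have hwb : Fb χ B (ind (P m)) w = b := by rw [← sumB_eq_Fb]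
      simp only [Pi.smul_apply, Pi.sub_apply, Pi.one_apply, hwb, smul_eq_mul, mul_one,
        sub_self, mul_zero]
  set T : Finset (Fin n → R) := Finset.univ.filter (fun w => ¬ dualRelB χ B P w u) with hT
  have hfun : ∀ w : {x // x ∈ T}, ∃ h : (Fin n → R) → ℂ,
      h ∈ M ∧ (∀ x, dualRelB χ B P x u → h x = 1) ∧ h w.1 = 0 := by
    intro w
    exact key w.1 (Finset.mem_filter.mp w.2).2
  choose h hM h1 h0 using hfun
  have heq : eclass χ B P u = ∏ w ∈ T.attach, h w := by
    funext x
    rw [Finset.prod_apply]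
    by_cases hx : dualRelB χ B P x u
    · rw [Finset.prod_eq_one (fun w _ => h1 w x hx)]
      simp [eclass, ind, hx]
    · have hxT : x ∈ T := by rw [hT, Finset.mem_filter]; exact ⟨Finset.mem_univ x, hx⟩
      rw [Finset.prod_eq_zero (Finset.mem_attach T ⟨x, hxT⟩) (h0 ⟨x, hxT⟩)]
      simp [eclass, ind, hx]
  rw [heq]
  exact Finset.prod_induction _ (· ∈ M) (fun a b ha hb => mul_mem_map hB ha hb) hone
    (fun w _ => hM w)

lemma decomp {f : (Fin n → R) → ℂ} (hf : f ∈ Wb χ B P) :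
    f = ∑ u : Fin n → R,
      (f u * ((Finset.univ.filter (fun w => dualRelB χ B P w u)).card : ℂ)⁻¹) •
        eclass χ B P u := by
  classical
  funext x
  rw [Finset.sum_apply]
  simp only [Pi.smul_apply, smul_eq_mul, eclass, ind, Set.mem_setOf_eq, mul_ite, mul_one,
    mul_zero]
  rw [← Finset.sum_filter]
  set K := Finset.univ.filter (fun u => dualRelB χ B P x u) with hK
  have hxK : x ∈ K := by rw [hK, Finset.mem_filter]; exact ⟨Finset.mem_univ x, dualRelB_refl P x⟩
  have hterm : ∀ u ∈ K, f u * ((Finset.univ.filter (fun w => dualRelB χ B P w u)).card : ℂ)⁻¹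
      = f x * ((K.card : ℂ))⁻¹ := by
    intro u hu
    rw [hK, Finset.mem_filter] at hu
    have hxu : dualRelB χ B P x u := hu.2
    have hfu : f u = f x := hf u x (dualRelB_symm hxu)
    have hKu : Finset.univ.filter (fun w => dualRelB χ B P w u) = K := by
      rw [hK]
      apply Finset.filter_congr
      intro w _
      constructor
      · intro hwu; exact dualRelB_trans hxu (dualRelB_symm hwu)
      · intro hwx; exact dualRelB_trans (dualRelB_symm hwx) hxu
    rw [hfu, hKu]
  rw [Finset.sum_congr rfl hterm, Finset.sum_const, nsmul_eq_mul]
  have hcard : (K.card : ℂ) ≠ 0 := by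
    simp only [ne_eq, Nat.cast_eq_zero, Finset.card_eq_zero]
    exact fun h => by simp [h] at hxK
  field_simp

lemma map_Dsub (hB : IsPairing χ B) : (Dsub χ B P).map (Fb χ B) = Wb χ B P := by
  apply le_antisymm
  · rintro f ⟨d, hd, rfl⟩
    exact hd.1
  · intro f hf
    rw [decomp hf]
    exact Submodule.sum_mem _ (fun u _ => Submodule.smul_mem _ _ (eclass_mem_map hB u))

lemma bidual_iff (hB : IsPairing χ B) (v v' : Fin n → R) :
    dualRelB χ (Function.swap B) (fun u => {w | dualRelB χ B P w u}) v v' ↔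
      ∀ f ∈ Dsub χ B P, f (-v) = f (-v') := by
  have hN : ((Fintype.card (Fin n → R) : ℂ)) ≠ 0 := by
    simp only [ne_eq, Nat.cast_eq_zero]
    exact Fintype.card_ne_zero
  constructor
  · intro h f hf
    have h1 : Fb χ B f ∈ Wb χ B P := hf.1
    have hdec := decomp h1
    have hterm : ∀ u : Fin n → R,
        Fb χ (Function.swap B) (eclass χ B P u) v = Fb χ (Function.swap B) (eclass χ B P u) v' := by
      intro u
      have hu := h u
      rw [sumB_eq_Fb, sumB_eq_Fb] at hu
      exact hu
    have hv : ∀ x : Fin n → R, Fb χ (Function.swap B) (Fb χ B f) x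
        = ∑ u : Fin n → R,
          (Fb χ B f u * ((Finset.univ.filter (fun w => dualRelB χ B P w u)).card : ℂ)⁻¹) *
            Fb χ (Function.swap B) (eclass χ B P u) x := by
      intro x
      conv_lhs => rw [hdec]
      rw [map_sum, Finset.sum_apply]
      refine Finset.sum_congr rfl fun u _ => ?_
      rw [_root_.map_smul]
      simp [smul_eq_mul]
    have hvv : Fb χ (Function.swap B) (Fb χ B f) v = Fb χ (Function.swap B) (Fb χ B f) v' := by
      rw [hv v, hv v']
      exact Finset.sum_congr rfl fun u _ => by rw [hterm u]
    rw [inversion hB, inversion hB] at hvv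
    exact mul_left_cancel₀ hN hvv
  · intro h u
    obtain ⟨d, hd, hde⟩ := eclass_mem_map hB (P := P) u
    have hset : ind {w | dualRelB χ B P w u} = Fb χ B d := by
      rw [hde]; rfl
    rw [sumB_eq_Fb, sumB_eq_Fb, hset, inversion hB, inversion hB, h d hd]

lemma Fb_ind_neg (hB : IsPairing χ B) (S : Set (Fin n → R)) (x : Fin n → R) :
    Fb χ (Function.swap B) (ind S) (-x) = (starRingEnd ℂ) (Fb χ (Function.swap B) (ind S) x) := by
  rw [Fb_apply, Fb_apply, map_sum]
  refine Finset.sum_congr rfl fun w _ => ?_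
  rw [_root_.map_mul]
  have h1 : (starRingEnd ℂ) (ind S w) = ind S w := by
    rw [ind]; split_ifs <;> simp
  rw [h1]
  congr 1
  rw [conj_char]
  show χ (B (-x) w) = χ (-B x w)
  rw [hB.negl]

lemma selfdual_mirror (hB : IsPairing χ B)
    (hcov : ∀ v, ∃ m, v ∈ P m) (hdisj : ∀ m m', m ≠ m' → Disjoint (P m) (P m'))
    (hne : ∀ m, (P m).Nonempty)
    (H : ∀ v v', (∃ m, v ∈ P m ∧ v' ∈ P m) ↔ dualRelB χ B P v v') :
    ∀ v v', (∃ m, v ∈ P m ∧ v' ∈ P m) ↔ dualRelB χ (Function.swap B) P v v' := by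
  classical
  have hN : ((Fintype.card (Fin n → R) : ℂ)) ≠ 0 := by
    simp only [ne_eq, Nat.cast_eq_zero]
    exact Fintype.card_ne_zero
  haveI : Finite ι := by
    apply Finite.of_injective (fun m : ι => (hne m).choose)
    intro m m' hmm
    by_contra hne'
    have h1 : (hne m).choose ∈ P m' := by
      rw [show (hne m).choose = (hne m').choose from hmm]
      exact (hne m').choose_spec
    exact Set.disjoint_left.mp (hdisj m m' hne') (hne m).choose_spec h1
  haveI : Fintype ι := Fintype.ofFinite ι
  have hindU : ∀ m : ι, ind (P m) ∈ Usub P := by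
    rintro m v v' ⟨k, hv, hv'⟩
    show (if v ∈ P m then (1:ℂ) else 0) = (if v' ∈ P m then (1:ℂ) else 0)
    by_cases hvm : v ∈ P m
    · have hmk : m = k := by
        by_contra hmk
        exact Set.disjoint_left.mp (hdisj m k hmk) hvm hv
      rw [if_pos hvm, if_pos (hmk ▸ hv')]
    · have hv'm : v' ∉ P m := by
        intro hv'm
        have hmk : m = k := by
          by_contra hmk
          exact Set.disjoint_left.mp (hdisj m k hmk) hv'm hv'
        exact hvm (hmk ▸ hv)
      rw [if_neg hvm, if_neg hv'm]
  have hUdec : ∀ f ∈ Usub P, f = ∑ m : ι, f ((hne m).choose) • ind (P m) := by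
    intro f hf
    funext x
    rw [Finset.sum_apply]
    obtain ⟨m0, hm0⟩ := hcov x
    rw [Finset.sum_eq_single m0]
    · have : ind (P m0) x = 1 := by rw [ind, if_pos hm0]
      rw [Pi.smul_apply, this, smul_eq_mul, mul_one]
      exact (hf _ x ⟨m0, (hne m0).choose_spec, hm0⟩).symm
    · intro m _ hm
      have hx : x ∉ P m := fun hx => Set.disjoint_left.mp (hdisj m m0 hm) hx hm0
      rw [Pi.smul_apply, ind, if_neg hx, smul_eq_mul, mul_zero]
    · intro h
      exact absurd (Finset.mem_univ m0) h
  have hUW : Usub P = Wb χ B P :=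
    le_antisymm (fun f hf v v' h => hf v v' ((H v v').mpr h))
      (fun f hf v v' h => hf v v' ((H v v').mp h))
  have hindWs : ∀ m : ι, ind (P m) ∈ Wb χ (Function.swap B) P := by
    intro m
    have hFm : Fb χ B (ind (P m)) ∈ Usub P := by
      rw [hUW]; exact (ind_mem_Dsub m).1
    have hdecm := hUdec _ hFm
    intro v v' hvv'
    have hx : ∀ x : Fin n → R, ind (P m) x = (Fintype.card (Fin n → R) : ℂ)⁻¹ *
        ∑ k : ι, Fb χ B (ind (P m)) ((hne k).choose) *
          (starRingEnd ℂ) (Fb χ (Function.swap B) (ind (P k)) x) := by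
      intro x
      have hinv := inversion hB (ind (P m)) (-x)
      rw [neg_neg] at hinv
      have hsum : Fb χ (Function.swap B) (Fb χ B (ind (P m))) (-x)
          = ∑ k : ι, Fb χ B (ind (P m)) ((hne k).choose) *
              (starRingEnd ℂ) (Fb χ (Function.swap B) (ind (P k)) x) := by
        conv_lhs => rw [hdecm]
        rw [map_sum, Finset.sum_apply]
        refine Finset.sum_congr rfl fun k _ => ?_
        rw [_root_.map_smul, Pi.smul_apply, smul_eq_mul, Fb_ind_neg hB]
      rw [hsum] at hinv
      exact (eq_inv_mul_iff_mul_eq₀ hN).mpr hinv.symm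
    rw [hx v, hx v']
    congr 1
    refine Finset.sum_congr rfl fun k _ => ?_
    congr 2
    have hk := hvv' k
    rw [sumB_eq_Fb, sumB_eq_Fb] at hk
    exact hk
  have hrank : Module.finrank ℂ (Wb χ (Function.swap B) P) = Module.finrank ℂ (Wb χ B P) := by
    rw [← map_Dsub hB, ← map_Dsub hB.swap, Dsub_swap]
    exact (LinearEquiv.finrank_eq
        (Submodule.equivMapOfInjective _ (Fb_inj hB.swap) (Dsub χ B P))).symm.trans
      (LinearEquiv.finrank_eq (Submodule.equivMapOfInjective _ (Fb_inj hB) (Dsub χ B P)))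
  have hle : Usub P ≤ Wb χ (Function.swap B) P := by
    intro f hf
    rw [hUdec f hf]
    exact Submodule.sum_mem _ (fun m _ => Submodule.smul_mem _ _ (hindWs m))
  have hUWs : Usub P = Wb χ (Function.swap B) P := by
    apply Submodule.eq_of_le_of_finrank_le hle
    exact le_of_eq (by rw [hrank, ← hUW])
  intro v v'
  constructor
  · intro hm k
    have hk : Fb χ (Function.swap B) (ind (P k)) ∈ Wb χ (Function.swap B) P :=
      (ind_mem_Dsub k).2
    rw [← hUWs] at hk
    have := hk v v' hm
    rw [sumB_eq_Fb, sumB_eq_Fb]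
    exact this
  · intro hd
    obtain ⟨m, hm⟩ := hcov v
    refine ⟨m, hm, ?_⟩
    have h1 : ind (P m) ∈ Wb χ (Function.swap B) P := by
      rw [← hUWs]; exact hindU m
    have h2 := h1 v v' hd
    show v' ∈ P m
    by_contra hv'
    simp only [ind, if_pos hm, if_neg hv'] at h2
    exact one_ne_zero h2

lemma isPairing_dot (χ : AddChar R ℂ) (hχ : IsGeneratingChar χ) :
    IsPairing χ (fun w v : Fin n → R => w ⬝ᵥ v) where
  addl := fun w w' v => add_dotProduct w w' v
  addr := fun w v v' => dotProduct_add w v v'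
  ndl := by
    intro w h
    funext i
    apply nondeg_right χ hχ
    intro y
    have hy := h (Pi.single i y)
    rwa [dotProduct_single] at hy
  ndr := by
    intro v h
    funext i
    apply nondeg_left χ hχ
    intro x
    have hx := h (Pi.single i x)
    rwa [single_dotProduct] at hx

end Bidual

/-- For a partition `P` of `R^n` over a finite Frobenius ring `R` with generating
character `χ`:
(1) the right `χ`-dual of the left `χ`-dual of `P` coincides with the left `χ`-dual of
the right `χ`-dual of `P` (the blocks of the left dual are the equivalence classes
`{w | leftDualRel χ P w u}`, `u ∈ R^n`, and similarly for the right dual);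
(2) `P` equals its left `χ`-dual partition iff `P` equals its right `χ`-dual partition. -/
theorem bidual_leftRight_eq_and_selfdual_iff
    (χ : AddChar R ℂ) (hχ : IsGeneratingChar χ)
    {ι : Type*} (P : ι → Set (Fin n → R))
    (hcov : ∀ v : Fin n → R, ∃ m : ι, v ∈ P m)
    (hdisj : ∀ m m' : ι, m ≠ m' → Disjoint (P m) (P m'))
    (hne : ∀ m : ι, (P m).Nonempty) :
    (∀ v v' : Fin n → R,
      rightDualRel χ (fun u : Fin n → R => {w | leftDualRel χ P w u}) v v' ↔
      leftDualRel χ (fun u : Fin n → R => {w | rightDualRel χ P w u}) v v') ∧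
    ((∀ v v' : Fin n → R, (∃ m : ι, v ∈ P m ∧ v' ∈ P m) ↔ leftDualRel χ P v v') ↔
     (∀ v v' : Fin n → R, (∃ m : ι, v ∈ P m ∧ v' ∈ P m) ↔ rightDualRel χ P v v')) := by
  have hBd := Bidual.isPairing_dot χ hχ (n := n)
  constructor
  · intro v v'
    have e1 : rightDualRel χ (fun u : Fin n → R => {w | leftDualRel χ P w u}) v v' ↔
        ∀ f ∈ Bidual.Dsub χ (fun w v : Fin n → R => w ⬝ᵥ v) P, f (-v) = f (-v') :=
      Bidual.bidual_iff hBd v v'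
    have e2 : leftDualRel χ (fun u : Fin n → R => {w | rightDualRel χ P w u}) v v' ↔
        ∀ f ∈ Bidual.Dsub χ (Function.swap (fun w v : Fin n → R => w ⬝ᵥ v)) P,
          f (-v) = f (-v') :=
      Bidual.bidual_iff hBd.swap v v'
    rw [Bidual.Dsub_swap] at e2
    exact e1.trans e2.symm
  · constructor
    · intro H
      exact Bidual.selfdual_mirror hBd hcov hdisj hne H
    · intro H
      exact Bidual.selfdual_mirror hBd.swap hcov hdisj hne H
end
end

section
/- Let R be a finite Frobenius ring with generating character χ, and let 𝒰 be a subgroup of GL(n,R). Let 𝒫_𝒰 denote the partition of R^n into orbits of the right action x ↦ xU (U ∈ 𝒰, x a row vector), and let 𝒫_{𝒰^T} denote the partition of R^n into orbits of the left action x ↦ (U x^T)^T. Then 𝒫_{𝒰^T} is the left χ-dual partition of 𝒫_𝒰; explicitly, for all v,v' ∈ R^n: (∃ U ∈ 𝒰 with v' = (U v^T)^T) if and only if for every orbit P of the right action, ∑_{w∈P} χ(⟨w,v⟩) = ∑_{w∈P} χ(⟨w,v'⟩). Likewise, 𝒫_𝒰 is the right χ-dual partition of 𝒫_{𝒰^T}: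 for all v,v' ∈ R^n, (∃ U ∈ 𝒰 with v' = vU) if and only if for every orbit Q of the left action, ∑_{w∈Q} χ(⟨v,w⟩) = ∑_{w∈Q} χ(⟨v',w⟩). -/
open Matrix
open scoped Classical

noncomputable section

variable {R : Type*} [Ring R] [Fintype R] {n : ℕ}

/-- The orbit of `v` under the right action `x ↦ xU` of the subgroup `𝒰` of `GL(n,R)`. -/
def rightOrbit (𝒰 : Subgroup (Matrix (Fin n) (Fin n) R)ˣ) (v : Fin n → R) :
    Set (Fin n → R) :=
  {w | ∃ U ∈ 𝒰, w = v ᵥ* U.val}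

/-- The orbit of `v` under the left action `x ↦ (U xᵀ)ᵀ` of the subgroup `𝒰` of `GL(n,R)`. -/
def leftOrbit (𝒰 : Subgroup (Matrix (Fin n) (Fin n) R)ˣ) (v : Fin n → R) :
    Set (Fin n → R) :=
  {w | ∃ U ∈ 𝒰, w = U.val *ᵥ v}

/-!
Let `𝒰` act on `V = Rⁿ` by `v ↦ U v` and on `W = Rⁿ` by `w ↦ w U`, which are adjoint for
`⟨w, v⟩ = w ⬝ᵥ v`. Since `χ` is generating, `w ↦ χ ⟨w, x⟩` is a nontrivial character of `W`
for `x ≠ 0`, so Fourier inversion gives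
`∑_w χ ⟨w, -v'⟩ ∑_{U ∈ 𝒰} χ ⟨w, U v⟩ = |W| · #{U ∈ 𝒰 | U v = v'}`.
The inner sum is `|Stab w|` times the sum of `χ ⟨·, v⟩` over the orbit `w 𝒰`, so equal orbit sums
for `v` and `v'` give `#{U | U v = v'} = #{U | U v' = v'} ≥ 1`. The second statement is the same
argument with the two actions exchanged; the right action is a left action of `𝒰ᵐᵒᵖ`.
-/

open MulAction

theorem MulAction.sum_smul_eq_card_stabilizer_nsmul_sum_orbit {G X M : Type*} [Group G]
    [Fintype G] [MulAction G X] [Finite X] [AddCommMonoid M] (f : X → M) (x : X) :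
    ∑ g : G, f (g • x)
      = Nat.card (stabilizer G x) • ∑ y ∈ (orbit G x).toFinite.toFinset, f y := by
  have himage : (orbit G x).toFinite.toFinset = Finset.univ.image fun g : G => g • x := by
    ext y; simp [mem_orbit_iff]
  have hfiber : ∀ g : G, (Finset.univ.filter fun h : G => h • x = g • x).card
      = Nat.card (stabilizer G x) := by
    intro g
    rw [Nat.card_eq_fintype_card, ← Fintype.card_subtype]
    refine Fintype.card_congr
      { toFun := fun h => ⟨g⁻¹ * h, by simp [mem_stabilizer_iff, mul_smul, h.2]⟩
        invFun := fun s => ⟨g * s, by rw [mul_smul, mem_stabilizer_iff.mp s.2]⟩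
        left_inv := fun h => by simp
        right_inv := fun s => by simp }
  rw [himage, Finset.sum_comp, Finset.smul_sum]
  refine Finset.sum_congr rfl fun y hy => ?_
  obtain ⟨g, -, rfl⟩ := Finset.mem_image.mp hy
  rw [hfiber]

instance {α : Type*} [Fintype α] : Fintype αᵐᵒᵖ :=
  Fintype.ofEquiv α MulOpposite.opEquiv

instance {ι S : Type*} [Fintype ι] [DecidableEq ι] [Semiring S] (𝒰 : Subgroup (Matrix ι ι S)ˣ) :
    MulAction 𝒰ᵐᵒᵖ (ι → S) :=
  MulAction.compHom _ ((Units.coeHom _).comp 𝒰.subtype).op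

section Pairing

variable {A V W : Type*} [AddCommMonoid A] [AddGroup V] [AddGroup W] [Fintype W]
  (χ : AddChar A ℂ) (β : W →+ V →+ A)

theorem sum_apply_pairing_eq_ite (hβ : ∀ x ≠ 0, ∃ w, χ (β w x) ≠ 1) (x : V) :
    ∑ w, χ (β w x) = if x = 0 then (Fintype.card W : ℂ) else 0 := by
  split_ifs with hx
  · simp [hx]
  · obtain ⟨w, hw⟩ := hβ x hx
    exact AddChar.sum_eq_zero_iff_ne_zero.mpr
      (AddChar.ne_zero_iff.mpr ⟨w, hw⟩ : χ.compAddMonoidHom (β.flip x) ≠ 0)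

variable {G : Type*} [Group G] [Fintype G] [MulAction G V]

theorem sum_pairing_neg_mul_sum_smul (hβ : ∀ x ≠ 0, ∃ w, χ (β w x) ≠ 1) (a v : V) :
    ∑ w, χ (β w (-v)) * ∑ g : G, χ (β w (g • a))
      = Fintype.card W * (Finset.univ.filter fun g : G => g • a = v).card := by
  simp_rw [Finset.mul_sum, ← AddChar.map_add_eq_mul, ← map_add]
  rw [Finset.sum_comm]
  simp_rw [sum_apply_pairing_eq_ite χ β hβ, neg_add_eq_zero, eq_comm (a := v)]
  rw [← Finset.sum_filter, Finset.sum_const, nsmul_eq_mul, mul_comm]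

theorem exists_smul_eq_iff_sum_smul_eq (hβ : ∀ x ≠ 0, ∃ w, χ (β w x) ≠ 1) (v v' : V) :
    (∃ g : G, g • v = v') ↔
      ∀ w, ∑ g : G, χ (β w (g • v)) = ∑ g : G, χ (β w (g • v')) := by
  constructor
  · rintro ⟨h, rfl⟩ w
    exact Fintype.sum_equiv (Equiv.mulRight h⁻¹) _ _ fun g => by simp [mul_smul]
  · intro H
    have hcount := sum_pairing_neg_mul_sum_smul (G := G) χ β hβ v v'
    simp_rw [H, sum_pairing_neg_mul_sum_smul χ β hβ v' v'] at hcount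
    have hcard : (Finset.univ.filter fun g : G => g • v = v').card
        = (Finset.univ.filter fun g : G => g • v' = v').card := by
      exact_mod_cast (mul_left_cancel₀ (by simp) hcount).symm
    obtain ⟨g, hg⟩ : (Finset.univ.filter fun g : G => g • v = v').Nonempty := by
      rw [← Finset.card_pos, hcard, Finset.card_pos]
      exact ⟨1, by simp⟩
    exact ⟨g, (Finset.mem_filter.mp hg).2⟩

theorem exists_smul_eq_iff_sum_orbit_eq {H : Type*} [Group H] [Fintype H] [MulAction H W]
    (e : G ≃ H) (he : ∀ g w v, β w (g • v) = β (e g • w) v)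
    (hβ : ∀ x ≠ 0, ∃ w, χ (β w x) ≠ 1) (v v' : V) :
    (∃ g : G, g • v = v') ↔
      ∀ u : W, ∑ w ∈ (orbit H u).toFinite.toFinset, χ (β w v)
        = ∑ w ∈ (orbit H u).toFinite.toFinset, χ (β w v') := by
  have hsum : ∀ u a, ∑ g : G, χ (β u (g • a))
      = Nat.card (stabilizer H u) • ∑ w ∈ (orbit H u).toFinite.toFinset, χ (β w a) := by
    intro u a
    rw [← sum_smul_eq_card_stabilizer_nsmul_sum_orbit (fun w => χ (β w a))]
    exact Fintype.sum_equiv e _ _ fun g => by rw [he]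
  simp only [exists_smul_eq_iff_sum_smul_eq χ β hβ, hsum]
  exact forall_congr' fun u => smul_right_inj Nat.card_pos.ne'

end Pairing

def dotProductAddMonoidHom {ι S : Type*} [Fintype ι] [NonUnitalNonAssocRing S] :
    (ι → S) →+ (ι → S) →+ S :=
  AddMonoidHom.mk' (fun v => AddMonoidHom.mk' (v ⬝ᵥ ·) (dotProduct_add v))
    fun v w => AddMonoidHom.ext (add_dotProduct v w)

namespace IsGeneratingChar

variable {χ : AddChar R ℂ}

theorem exists_apply_mul_left_ne_one (hχ : IsGeneratingChar χ) {a : R} (ha : a ≠ 0) :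
    ∃ t, χ (t * a) ≠ 1 := by
  by_contra! h
  obtain ⟨r, -, huniq⟩ := hχ 1
  exact ha ((huniq a fun x => (h x).symm).trans (huniq 0 fun x => by simp).symm)

theorem exists_apply_mul_right_ne_one (hχ : IsGeneratingChar χ) {a : R} (ha : a ≠ 0) :
    ∃ t, χ (a * t) ≠ 1 := by
  obtain ⟨ψ, hψ⟩ := AddChar.exists_apply_ne_zero.mpr ha
  obtain ⟨r, hr, -⟩ := hχ ψ
  exact ⟨r, hr a ▸ hψ⟩

variable {ι : Type*} [Fintype ι] [DecidableEq ι] {x : ι → R}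

theorem exists_dotProduct_left_ne_one (hχ : IsGeneratingChar χ) (hx : x ≠ 0) :
    ∃ w, χ (w ⬝ᵥ x) ≠ 1 := by
  obtain ⟨i, hi⟩ := Function.ne_iff.mp hx
  obtain ⟨t, ht⟩ := hχ.exists_apply_mul_left_ne_one hi
  exact ⟨Pi.single i t, by rwa [single_dotProduct]⟩

theorem exists_dotProduct_right_ne_one (hχ : IsGeneratingChar χ) (hx : x ≠ 0) :
    ∃ w, χ (x ⬝ᵥ w) ≠ 1 := by
  obtain ⟨i, hi⟩ := Function.ne_iff.mp hx
  obtain ⟨t, ht⟩ := hχ.exists_apply_mul_right_ne_one hi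
  exact ⟨Pi.single i t, by rwa [dotProduct_single]⟩

end IsGeneratingChar

section Orbits

variable (𝒰 : Subgroup (Matrix (Fin n) (Fin n) R)ˣ)

omit [Fintype R] in
theorem rightOrbit_eq_orbit (u : Fin n → R) : rightOrbit 𝒰 u = orbit 𝒰ᵐᵒᵖ u := by
  ext w
  constructor
  · rintro ⟨U, hU, rfl⟩
    exact ⟨MulOpposite.op ⟨U, hU⟩, rfl⟩
  · rintro ⟨U, rfl⟩
    exact ⟨U.unop, U.unop.2, rfl⟩

omit [Fintype R] in
theorem leftOrbit_eq_orbit (u : Fin n → R) : leftOrbit 𝒰 u = orbit 𝒰 u := by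
  ext w
  constructor
  · rintro ⟨U, hU, rfl⟩
    exact ⟨⟨U, hU⟩, rfl⟩
  · rintro ⟨U, rfl⟩
    exact ⟨U, U.2, rfl⟩

end Orbits

section Existence

variable {ι S : Type*} [Fintype ι] [DecidableEq ι] [Semiring S] (𝒰 : Subgroup (Matrix ι ι S)ˣ)

theorem exists_mem_eq_mulVec_iff (v v' : ι → S) :
    (∃ U ∈ 𝒰, v' = U.val *ᵥ v) ↔ ∃ U : 𝒰, U • v = v' :=
  ⟨fun ⟨U, hU, h⟩ => ⟨⟨U, hU⟩, h.symm⟩, fun ⟨U, h⟩ => ⟨U, U.2, h.symm⟩⟩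

theorem exists_mem_eq_vecMul_iff (v v' : ι → S) :
    (∃ U ∈ 𝒰, v' = v ᵥ* U.val) ↔ ∃ U : 𝒰ᵐᵒᵖ, U • v = v' :=
  ⟨fun ⟨U, hU, h⟩ => ⟨MulOpposite.op ⟨U, hU⟩, h.symm⟩,
    fun ⟨U, h⟩ => ⟨U.unop, U.unop.2, h.symm⟩⟩

end Existence

/-- Over a finite Frobenius ring `R` with generating character `χ` and a subgroup
`𝒰 ≤ GL(n,R)`: the partition of `R^n` into orbits of the left action is the left
`χ`-dual of the partition into orbits of the right action, and the latter is the right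
`χ`-dual of the former. -/
theorem orbitPartition_duality (χ : AddChar R ℂ) (hχ : IsGeneratingChar χ)
    (𝒰 : Subgroup (Matrix (Fin n) (Fin n) R)ˣ) :
    (∀ v v' : Fin n → R,
      (∃ U ∈ 𝒰, v' = U.val *ᵥ v) ↔
      (∀ u : Fin n → R, sumL χ (rightOrbit 𝒰 u) v = sumL χ (rightOrbit 𝒰 u) v')) ∧
    (∀ v v' : Fin n → R,
      (∃ U ∈ 𝒰, v' = v ᵥ* U.val) ↔
      (∀ u : Fin n → R, sumR χ (leftOrbit 𝒰 u) v = sumR χ (leftOrbit 𝒰 u) v')) := by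
  refine ⟨fun v v' => ?_, fun v v' => ?_⟩
  · simp only [exists_mem_eq_mulVec_iff, sumL, rightOrbit_eq_orbit]
    exact exists_smul_eq_iff_sum_orbit_eq χ dotProductAddMonoidHom MulOpposite.opEquiv
      (fun (U : 𝒰) w v => dotProduct_mulVec w U.val.val v)
      (fun _ => hχ.exists_dotProduct_left_ne_one) v v'
  · simp only [exists_mem_eq_vecMul_iff, sumR, leftOrbit_eq_orbit]
    exact exists_smul_eq_iff_sum_orbit_eq χ (dotProductAddMonoidHom (ι := Fin n) (S := R)).flip
      MulOpposite.opEquiv.symm (fun (U : 𝒰ᵐᵒᵖ) w v => (dotProduct_mulVec v U.unop.val.val w).symm)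
      (fun _ => hχ.exists_dotProduct_right_ne_one) v v'
end
end

section
/- Let R be a finite Frobenius ring (i.e., a finite ring admitting a generating character) and let 𝒰 be a subgroup of GL(n,R). Then the right action of 𝒰 on R^n given by (x,U) ↦ xU and the left action of 𝒰 on R^n given by (U,x) ↦ (U x^T)^T have the same number of orbits. -/
open Matrix

noncomputable section

/-- A finite ring is Frobenius iff it admits a generating character. -/
def IsFrobeniusRing (R : Type*) [Ring R] [Fintype R] : Prop :=
  ∃ χ : AddChar R ℂ, IsGeneratingChar χ

/-! By Burnside's lemma it suffices that every `U ∈ 𝒰` fixes as many row vectors as column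
vectors, i.e. that the left and right kernels of `U - 1` have the same size. For a square matrix
`M` this follows by evaluating `∑ₓ ∑ᵧ χ (x ⬝ᵥ M *ᵥ y)` in both orders: a generating character
makes the dot-product pairing nondegenerate on both sides, so by orthogonality the two orders
count the left and the right kernel of `M`. -/

theorem AddChar.card_leftKernel_mul_card_eq_card_rightKernel_mul_card {A B C : Type*}
    [AddGroup A] [AddGroup B] [AddCommGroup C] [Fintype A] [Fintype B]
    (χ : AddChar C ℂ) (β : A →+ B →+ C) :
    Nat.card {x : A // ∀ y, χ (β x y) = 1} * Nat.card B =
      Nat.card {y : B // ∀ x, χ (β x y) = 1} * Nat.card A := by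
  classical
  have sum_left (x : A) :
      ∑ y, χ (β x y) = if ∀ y, χ (β x y) = 1 then (Nat.card B : ℂ) else 0 := by
    simpa [AddChar.eq_zero_iff] using (χ.compAddMonoidHom (β x)).sum_eq_ite
  have sum_right (y : B) :
      ∑ x, χ (β x y) = if ∀ x, χ (β x y) = 1 then (Nat.card A : ℂ) else 0 := by
    simpa [AddChar.eq_zero_iff] using (χ.compAddMonoidHom (β.flip y)).sum_eq_ite
  have key : ((Nat.card {x : A // ∀ y, χ (β x y) = 1} * Nat.card B : ℕ) : ℂ) =
      (Nat.card {y : B // ∀ x, χ (β x y) = 1} * Nat.card A : ℕ) := by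
    calc _ = ∑ x, ∑ y, χ (β x y) := by
          simp [sum_left, Finset.sum_ite, Nat.card_eq_fintype_card, Fintype.card_subtype]
      _ = ∑ y, ∑ x, χ (β x y) := Finset.sum_comm
      _ = _ := by
          simp [sum_right, Finset.sum_ite, Nat.card_eq_fintype_card, Fintype.card_subtype]
  exact_mod_cast key

namespace MulAction

theorem card_orbits_eq_card_quotient (G X : Type*) [Group G] [MulAction G X] :
    Nat.card {S : Set X // ∃ v, S = orbit G v} = Nat.card (orbitRel.Quotient G X) := by
  refine (Nat.card_congr ((Equiv.ofInjective _ orbitRel.Quotient.orbit_injective).trans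
    (Equiv.subtypeEquivRight fun S => ?_))).symm
  simp only [Set.mem_range, Quotient.exists, eq_comm (a := S)]
  rfl

theorem card_quotient_eq_of_card_fixedBy_eq {G H X Y : Type*} [Group G] [Group H]
    [MulAction G X] [MulAction H Y] [Finite G] [Finite X] [Finite Y] (e : G ≃ H)
    (hfix : ∀ g, Nat.card (fixedBy X g) = Nat.card (fixedBy Y (e g))) :
    Nat.card (orbitRel.Quotient G X) = Nat.card (orbitRel.Quotient H Y) := by
  classical
  have : Fintype G := Fintype.ofFinite G
  have : Fintype H := Fintype.ofEquiv G e
  have : Fintype X := Fintype.ofFinite X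
  have : Fintype Y := Fintype.ofFinite Y
  have : Fintype (orbitRel.Quotient G X) := Fintype.ofFinite _
  have : Fintype (orbitRel.Quotient H Y) := Fintype.ofFinite _
  have burnsideG := sum_card_fixedBy_eq_card_orbits_mul_card_group G X
  have burnsideH := sum_card_fixedBy_eq_card_orbits_mul_card_group H Y
  simp only [← Nat.card_eq_fintype_card] at burnsideG burnsideH
  refine Nat.eq_of_mul_eq_mul_right (Nat.card_pos (α := G)) ?_
  rw [← burnsideG, Nat.card_congr e, ← burnsideH, ← e.sum_comp]
  exact Finset.sum_congr rfl fun g _ => hfix g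

end MulAction

/-- `𝒰 ≤ Mˣ` transported to `(Mᵐᵒᵖ)ˣ`: a right action of `M` is a left action of `Mᵐᵒᵖ`, so this
is how `𝒰` acts on row vectors through `Module (Matrix n n R)ᵐᵒᵖ (n → R)`. -/
def Subgroup.unitsOp {M : Type*} [Monoid M] (𝒰 : Subgroup Mˣ) : Subgroup Mᵐᵒᵖˣ :=
  𝒰.op.comap Units.opEquiv.toMonoidHom

def Subgroup.unitsOpEquiv {M : Type*} [Monoid M] (𝒰 : Subgroup Mˣ) : 𝒰.unitsOp ≃ 𝒰 :=
  (Units.opEquiv.toEquiv.trans MulOpposite.opEquiv.symm).subtypeEquiv fun _ => Iff.rfl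

open MulAction

namespace Matrix

variable {n R : Type*} [Fintype n] [DecidableEq n] [Ring R]

theorem orbit_subgroup_units (𝒰 : Subgroup (Matrix n n R)ˣ) (v : n → R) :
    orbit 𝒰 v = {w | ∃ U ∈ 𝒰, w = U.val *ᵥ v} := by
  ext w
  simp [mem_orbit_iff, Subgroup.smul_def, Units.smul_def, eq_comm]

theorem orbit_subgroup_unitsOp (𝒰 : Subgroup (Matrix n n R)ˣ) (v : n → R) :
    orbit 𝒰.unitsOp v = {w | ∃ U ∈ 𝒰, w = v ᵥ* U.val} := by
  ext w
  constructor
  · rintro ⟨u, rfl⟩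
    exact ⟨𝒰.unitsOpEquiv u, (𝒰.unitsOpEquiv u).2, rfl⟩
  · rintro ⟨U, hU, rfl⟩
    exact ⟨𝒰.unitsOpEquiv.symm ⟨U, hU⟩, rfl⟩

theorem fixedBy_units (U : (Matrix n n R)ˣ) :
    fixedBy (n → R) U = {x | (U.val - 1) *ᵥ x = 0} := by
  ext x
  simp [sub_mulVec, sub_eq_zero, Units.smul_def]

theorem fixedBy_unitsOp (U : (Matrix n n R)ᵐᵒᵖˣ) :
    fixedBy (n → R) U = {x | x ᵥ* (U.val.unop - 1) = 0} := by
  ext x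
  simp [vecMul_sub, sub_eq_zero, Units.smul_def]

end Matrix

namespace IsGeneratingChar

variable {R : Type*} [Ring R] [Fintype R] {χ : AddChar R ℂ}

theorem eq_zero_of_forall_mul_right (hχ : IsGeneratingChar χ) {a : R}
    (ha : ∀ x, χ (x * a) = 1) : a = 0 := by
  obtain ⟨r, -, hr⟩ := hχ 1
  exact (hr a fun x => (ha x).symm).trans (hr 0 fun x => by simp).symm

/-- The left version does not follow from the definition directly, but from the right version
through the counting identity for the pairing `(x, y) ↦ x * y`. -/
theorem eq_zero_of_forall_mul_left (hχ : IsGeneratingChar χ) {a : R}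
    (ha : ∀ x, χ (a * x) = 1) : a = 0 := by
  have hcard := χ.card_leftKernel_mul_card_eq_card_rightKernel_mul_card (AddMonoidHom.mul (R := R))
  have hright : Nat.card {y : R // ∀ x, χ (x * y) = 1} = 1 :=
    Nat.card_eq_one_iff_exists.mpr
      ⟨⟨0, by simp⟩, fun y => Subtype.ext (hχ.eq_zero_of_forall_mul_right y.2)⟩
  simp only [AddMonoidHom.mul_apply, hright, one_mul, Nat.mul_eq_right Nat.card_pos.ne'] at hcard
  have := (Nat.card_eq_one_iff_unique.mp hcard).1
  exact congrArg Subtype.val (Subsingleton.elim (α := {x : R // ∀ y, χ (x * y) = 1})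
    ⟨a, ha⟩ ⟨0, by simp⟩)

variable {ι : Type*} [Fintype ι]

theorem eq_zero_of_forall_dotProduct_right (hχ : IsGeneratingChar χ) {v : ι → R}
    (hv : ∀ x, χ (x ⬝ᵥ v) = 1) : v = 0 := by
  classical
  funext i
  exact hχ.eq_zero_of_forall_mul_right fun t => by simpa using hv (Pi.single i t)

theorem eq_zero_of_forall_dotProduct_left (hχ : IsGeneratingChar χ) {v : ι → R}
    (hv : ∀ y, χ (v ⬝ᵥ y) = 1) : v = 0 := by
  classical
  funext i
  exact hχ.eq_zero_of_forall_mul_left fun t => by simpa using hv (Pi.single i t)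

theorem card_ker_vecMul_eq_card_ker_mulVec (hχ : IsGeneratingChar χ) (M : Matrix ι ι R) :
    Nat.card {x : ι → R // x ᵥ* M = 0} = Nat.card {y : ι → R // M *ᵥ y = 0} := by
  classical
  let β : (ι → R) →+ (ι → R) →+ R :=
    { toFun x :=
        { toFun y := x ⬝ᵥ M *ᵥ y
          map_zero' := by simp
          map_add' := by simp [mulVec_add, dotProduct_add] }
      map_zero' := by ext; simp
      map_add' x x' := by ext; simp [add_dotProduct] }
  have hleft (x : ι → R) : (∀ y, χ (β x y) = 1) ↔ x ᵥ* M = 0 := by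
    refine ⟨fun h => hχ.eq_zero_of_forall_dotProduct_left fun y => ?_, fun h y => ?_⟩
    · simpa [β, dotProduct_mulVec] using h y
    · simp [β, dotProduct_mulVec, h]
  have hright (y : ι → R) : (∀ x, χ (β x y) = 1) ↔ M *ᵥ y = 0 :=
    ⟨fun h => hχ.eq_zero_of_forall_dotProduct_right h, fun h x => by simp [β, h]⟩
  have hcard := χ.card_leftKernel_mul_card_eq_card_rightKernel_mul_card β
  rw [Nat.card_congr (Equiv.subtypeEquivRight hleft),
    Nat.card_congr (Equiv.subtypeEquivRight hright)] at hcard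
  exact Nat.eq_of_mul_eq_mul_right Nat.card_pos hcard

theorem card_fixedBy_unitsOp_eq [DecidableEq ι] (hχ : IsGeneratingChar χ)
    (𝒰 : Subgroup (Matrix ι ι R)ˣ) (u : 𝒰.unitsOp) :
    Nat.card (fixedBy (ι → R) u) = Nat.card (fixedBy (ι → R) (𝒰.unitsOpEquiv u)) := by
  change Nat.card (fixedBy (ι → R) (u : (Matrix ι ι R)ᵐᵒᵖˣ)) =
    Nat.card (fixedBy (ι → R) (𝒰.unitsOpEquiv u : (Matrix ι ι R)ˣ))
  rw [fixedBy_unitsOp, fixedBy_units]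
  exact hχ.card_ker_vecMul_eq_card_ker_mulVec _

end IsGeneratingChar

/-- Over a finite Frobenius ring, the right action `(x,U) ↦ xU` and the left action
`(U,x) ↦ (U xᵀ)ᵀ` of a subgroup `𝒰 ≤ GL(n,R)` on `R^n` have the same number of orbits. -/
theorem card_rightOrbits_eq_card_leftOrbits
    {R : Type*} [Ring R] [Fintype R] (hR : IsFrobeniusRing R) {n : ℕ}
    (𝒰 : Subgroup (Matrix (Fin n) (Fin n) R)ˣ) :
    Nat.card {S : Set (Fin n → R) //
        ∃ v : Fin n → R, S = {w | ∃ U ∈ 𝒰, w = v ᵥ* U.val}} =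
    Nat.card {S : Set (Fin n → R) //
        ∃ v : Fin n → R, S = {w | ∃ U ∈ 𝒰, w = U.val *ᵥ v}} := by
  obtain ⟨χ, hχ⟩ := hR
  have : Finite 𝒰.unitsOp := .of_equiv _ 𝒰.unitsOpEquiv.symm
  simp only [← orbit_subgroup_unitsOp, ← orbit_subgroup_units, card_orbits_eq_card_quotient]
  exact card_quotient_eq_of_card_fixedBy_eq 𝒰.unitsOpEquiv (hχ.card_fixedBy_unitsOp_eq 𝒰)
end
end

section
/- Let R be a finite Frobenius ring (i.e., a finite ring admitting a generating character) and let LT(n,R) be the group of invertible lower triangular n×n matrices over R. Then LT(n,R) satisfies the local-global property: every local LT(n,R)-map f : C → R^n defined on a code C ⊆ R^n is a global LT(n,R)-map. -/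
open Matrix

noncomputable section

namespace LTLG

open Finset

theorem isUnit_of_mul_eq_one' {M : Type*} [Monoid M] [Finite M] {a b : M}
    (h : a * b = 1) : IsUnit a := by
  have hsurj : Function.Surjective (fun x : M => a * x) := fun y =>
    ⟨b * y, by show a * (b * y) = y; rw [← mul_assoc, h, one_mul]⟩
  have hinj : Function.Injective (fun x : M => a * x) :=
    (Finite.injective_iff_surjective).mpr hsurj
  have hba : b * a = 1 := by
    apply hinj
    show a * (b * a) = a * 1
    rw [← mul_assoc, h, one_mul, mul_one]
  exact ⟨⟨a, b, h, hba⟩, rfl⟩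

theorem sumChar {G : Type*} [AddCommGroup G] [Fintype G] (F : G → ℂ)
    (hF : ∀ a b, F (a + b) = F a * F b) :
    (∑ g, F g) = if ∀ g, F g = 1 then (Fintype.card G : ℂ) else 0 := by
  split_ifs with h
  · simp [h, Finset.card_univ]
  · push_neg at h
    obtain ⟨g₀, hg₀⟩ := h
    have key : F g₀ * (∑ g, F g) = ∑ g, F g := by
      rw [Finset.mul_sum]
      exact Fintype.sum_equiv (Equiv.addLeft g₀) _ _ (fun g => (hF g₀ g).symm)
    have h2 : (F g₀ - 1) * (∑ g, F g) = 0 := by rw [sub_mul, one_mul, key, sub_self]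
    rcases mul_eq_zero.mp h2 with h' | h'
    · exact absurd (by linear_combination h') hg₀
    · exact h'



section Matrices

variable {R : Type*} [Ring R]

theorem pow_strictLower_entry {n : ℕ} (A : Matrix (Fin n) (Fin n) R)
    (hA : ∀ i j : Fin n, i ≤ j → A i j = 0) :
    ∀ (k : ℕ) (i j : Fin n), (i : ℕ) < (j : ℕ) + k → (A ^ k) i j = 0 := by
  intro k
  induction k with
  | zero =>
    intro i j hij
    rw [pow_zero]
    exact Matrix.one_apply_ne (Fin.ne_of_lt (by simpa using hij))
  | succ k IH =>
    intro i j hij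
    rw [pow_succ, Matrix.mul_apply]
    apply Finset.sum_eq_zero
    intro t _
    by_cases ht : (i : ℕ) < (t : ℕ) + k
    · rw [IH i t ht, zero_mul]
    · push_neg at ht
      have htj : t ≤ j := by
        by_contra hjt
        push_neg at hjt
        have : (j : ℕ) < (t : ℕ) := hjt
        omega
      rw [hA t j htj, mul_zero]

theorem pow_strictLower_eq_zero {n : ℕ} (A : Matrix (Fin n) (Fin n) R)
    (hA : ∀ i j : Fin n, i ≤ j → A i j = 0) : A ^ n = 0 := by
  ext i j
  rw [pow_strictLower_entry A hA n i j (by omega)]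
  rfl

theorem isUnit_one_add_strictLower {n : ℕ} (A : Matrix (Fin n) (Fin n) R)
    (hA : ∀ i j : Fin n, i ≤ j → A i j = 0) : IsUnit ((1 : Matrix (Fin n) (Fin n) R) + A) := by
  have hnil : (-A) ^ n = 0 := by
    rw [neg_pow, pow_strictLower_eq_zero A hA, mul_zero]
  set S := ∑ i ∈ Finset.range n, (-A) ^ i with hS
  have h1 : S * (-A - 1) = (-A) ^ n - 1 := geom_sum_mul (-A) n
  have h2 : (-A - 1) * S = (-A) ^ n - 1 := mul_geom_sum (-A) n
  rw [hnil, zero_sub] at h1 h2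
  have hneg : -A - 1 = -(1 + A) := by abel
  rw [hneg, neg_mul] at h2
  rw [hneg, mul_neg] at h1
  have e1 : (1 + A) * S = 1 := by
    have := neg_injective h2
    exact this
  have e2 : S * (1 + A) = 1 := by
    have := neg_injective h1
    exact this
  exact ⟨⟨1 + A, S, e1, e2⟩, rfl⟩

theorem isUnit_lowerTriangular {n : ℕ} (M : Matrix (Fin n) (Fin n) R)
    (htri : ∀ i j : Fin n, i < j → M i j = 0) (hdiag : ∀ i, IsUnit (M i i)) : IsUnit M := by
  classical
  set d : Fin n → Rˣ := fun i => (hdiag i).unit with hdd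
  have hd : ∀ i, (d i : R) = M i i := fun i => (hdiag i).unit_spec
  set D : Matrix (Fin n) (Fin n) R := Matrix.diagonal (fun i => (d i : R)) with hDdef
  set D' : Matrix (Fin n) (Fin n) R := Matrix.diagonal (fun i => ((d i)⁻¹ : Rˣ)) with hD'def
  have hDD' : D * D' = 1 := by
    rw [hDdef, hD'def, Matrix.diagonal_mul_diagonal]
    have h4 : (fun i => (d i : R) * ((d i)⁻¹ : Rˣ)) = fun _ => (1 : R) :=
      funext fun i => by exact_mod_cast Units.mul_inv (d i)
    rw [h4, Matrix.diagonal_one]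
  have hD'D : D' * D = 1 := by
    rw [hDdef, hD'def, Matrix.diagonal_mul_diagonal]
    have h4 : (fun i => ((d i)⁻¹ : Rˣ) * (d i : R)) = fun _ => (1 : R) :=
      funext fun i => by exact_mod_cast Units.inv_mul (d i)
    rw [h4, Matrix.diagonal_one]
  set A := D' * M - 1 with hA
  have hAlow : ∀ i j : Fin n, i ≤ j → A i j = 0 := by
    intro i j hij
    have hDM : (D' * M) i j = ((d i)⁻¹ : Rˣ) * M i j := by
      rw [hD'def, Matrix.diagonal_mul]
    rcases eq_or_lt_of_le hij with rfl | hlt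
    · rw [hA, Matrix.sub_apply, hDM, ← hd i, Matrix.one_apply_eq]
      exact_mod_cast sub_eq_zero.mpr (Units.inv_mul (d i))
    · rw [hA, Matrix.sub_apply, hDM, htri i j hlt, mul_zero,
        Matrix.one_apply_ne (Fin.ne_of_lt hlt), sub_zero]
  have h1A : IsUnit ((1 : Matrix (Fin n) (Fin n) R) + A) := isUnit_one_add_strictLower A hAlow
  have hM : M = D * (1 + A) := by
    rw [hA]
    have h3 : (1 : Matrix (Fin n) (Fin n) R) + (D' * M - 1) = D' * M := by abel
    rw [h3, ← Matrix.mul_assoc, hDD', Matrix.one_mul]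
  rw [hM]
  exact IsUnit.mul ⟨⟨D, D', hDD', hD'D⟩, rfl⟩ h1A

theorem diag_isUnit {n : ℕ} [Finite R] (M : Matrix (Fin n) (Fin n) R) (hM : IsUnit M)
    (htri : ∀ i j : Fin n, i < j → M i j = 0) : ∀ j, IsUnit (M j j) := by
  classical
  obtain ⟨u, hu⟩ := hM
  set W : Matrix (Fin n) (Fin n) R := Units.val u⁻¹ with hW
  have h1 : M * W = 1 := by rw [← hu, hW]; exact u.mul_inv
  have main : ∀ m : ℕ, ∀ j : Fin n, (j : ℕ) = m → IsUnit (M j j) := by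
    intro m
    induction m using Nat.strong_induction_on with
    | _ m IH =>
      intro j hj
      have hdlt : ∀ k : Fin n, (k : ℕ) < (j : ℕ) → IsUnit (M k k) := fun k hk =>
        IH (k : ℕ) (hj ▸ hk) k rfl
      have hWzero : ∀ p : ℕ, ∀ k : Fin n, (k : ℕ) = p → (k : ℕ) < (j : ℕ) → W k j = 0 := by
        intro p
        induction p using Nat.strong_induction_on with
        | _ p IHp =>
          intro k hk hkj
          have hrow : (M * W) k j = 0 := by
            rw [h1]
            exact Matrix.one_apply_ne (Fin.ne_of_lt (show k < j from hkj))
          rw [Matrix.mul_apply] at hrow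
          have hsum : ∑ t, M k t * W t j = M k k * W k j := by
            apply Finset.sum_eq_single k
            · intro t _ htk
              rcases lt_or_gt_of_ne htk with hlt | hgt
              · rw [IHp (t : ℕ) (hk ▸ hlt) t rfl (lt_trans hlt hkj), mul_zero]
              · rw [htri k t hgt, zero_mul]
            · intro hk'
              exact absurd (Finset.mem_univ k) hk'
          rw [hsum] at hrow
          obtain ⟨v, hv⟩ := hdlt k hkj
          calc W k j = (↑v⁻¹ * ↑v) * W k j := by rw [Units.inv_mul, one_mul]
            _ = ↑v⁻¹ * (M k k * W k j) := by rw [mul_assoc, hv]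
            _ = 0 := by rw [hrow, mul_zero]
      have hdj : (M * W) j j = 1 := by rw [h1]; exact Matrix.one_apply_eq j
      rw [Matrix.mul_apply] at hdj
      have hsum : ∑ t, M j t * W t j = M j j * W j j := by
        apply Finset.sum_eq_single j
        · intro t _ htj
          rcases lt_or_gt_of_ne htj with hlt | hgt
          · rw [hWzero (t : ℕ) t rfl hlt, mul_zero]
          · rw [htri j t hgt, zero_mul]
        · intro hj'
          exact absurd (Finset.mem_univ j) hj'
      rw [hsum] at hdj
      exact isUnit_of_mul_eq_one' hdj
  exact fun j => main (j : ℕ) j rfl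

end Matrices

section Char

variable {R : Type*} [Ring R] [Fintype R] {χ : AddChar R ℂ} (hχ : IsGeneratingChar χ)

theorem chi_sum {ι : Type*} (s : Finset ι) (g : ι → R) :
    χ (∑ i ∈ s, g i) = ∏ i ∈ s, χ (g i) := by
  induction s using Finset.cons_induction with
  | empty => simp
  | cons a s ha IH => rw [Finset.sum_cons, Finset.prod_cons, AddChar.map_add_eq_mul, IH]

include hχ

/-- Left nondegeneracy of a generating character. -/
theorem lnd {e : R} (h : ∀ t, χ (t * e) = 1) : e = 0 := by
  obtain ⟨r, _, huniq⟩ := hχ 1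
  have h0 : (0 : R) = r := huniq 0 (by intro x; simp)
  have he : e = r := huniq e (by intro x; rw [AddChar.one_apply, h x])
  rw [he, ← h0]

/-- Right nondegeneracy of a generating character. -/
theorem rnd {e : R} (h : ∀ t, χ (e * t) = 1) : e = 0 := by
  classical
  set N : AddSubgroup R :=
    { carrier := {z | ∀ t, χ (z * t) = 1}
      zero_mem' := by intro t; simp
      add_mem' := by
        intro a b ha hb t
        rw [add_mul, AddChar.map_add_eq_mul, ha t, hb t, one_mul]
      neg_mem' := by
        intro a ha t
        rw [neg_mul, AddChar.map_neg_eq_inv, ha t, inv_one] } with hN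
  let Ψ : R → (Multiplicative R →* ℂ) := fun t =>
    { toFun := fun z => χ (z.toAdd * t)
      map_one' := by simpa using AddChar.map_zero_eq_one χ
      map_mul' := by intro a b; simp [add_mul, AddChar.map_add_eq_mul] }
  have hΨinj : Function.Injective Ψ := by
    intro s t hst
    have h1 : ∀ z : R, χ (z * s) = χ (z * t) := fun z => congrFun (congrArg (fun f => f.toFun) hst) z
    have h2 : ∀ z : R, χ (z * (s - t)) = 1 := by
      intro z
      rw [mul_sub, sub_eq_add_neg, AddChar.map_add_eq_mul, h1 z, AddChar.map_neg_eq_inv,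
        mul_inv_cancel₀]
      exact (χ.val_isUnit _).ne_zero
    have := lnd hχ h2
    exact sub_eq_zero.mp this
  let Q := R ⧸ N
  haveI : Fintype Q := Fintype.ofFinite Q
  let π : (Q → ℂ) →ₗ[ℂ] (R → ℂ) := LinearMap.funLeft ℂ ℂ (QuotientAddGroup.mk (s := N))
  have hπ : Function.Injective π :=
    LinearMap.funLeft_injective_of_surjective ℂ ℂ _ QuotientAddGroup.mk_surjective
  have hmem : ∀ t : R, (fun z : R => χ (z * t)) ∈ LinearMap.range π := by
    intro t
    refine ⟨Quotient.lift (fun z : R => χ (z * t)) ?_, ?_⟩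
    · intro a b hab
      replace hab : -a + b ∈ N := QuotientAddGroup.leftRel_apply.mp hab
      have hb : b = a + (-a + b) := by abel
      show χ (a * t) = χ (b * t)
      rw [hb, add_mul, AddChar.map_add_eq_mul, hab t, mul_one]
    · rfl
  let v : R → LinearMap.range π := fun t => ⟨_, hmem t⟩
  have hv : LinearIndependent ℂ v := by
    have h1 : LinearIndependent ℂ (fun t : R => ((Ψ t : Multiplicative R → ℂ) : R → ℂ)) :=
      (linearIndependent_monoidHom (Multiplicative R) ℂ).comp Ψ hΨinj
    exact h1.of_comp (LinearMap.range π).subtype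
  have hcard : Fintype.card R ≤ Module.finrank ℂ (LinearMap.range π) :=
    hv.fintype_card_le_finrank
  have hrank : Module.finrank ℂ ↥(LinearMap.range π) = Fintype.card Q := by
    rw [LinearMap.finrank_range_of_inj hπ, Module.finrank_pi]
  have hlag : Nat.card R = Nat.card Q * Nat.card N :=
    AddSubgroup.card_eq_card_quotient_mul_card_addSubgroup N
  have hQpos : 0 < Fintype.card Q := Fintype.card_pos
  have hNle : Nat.card N ≤ 1 := by
    rw [Nat.card_eq_fintype_card, Nat.card_eq_fintype_card] at hlag
    have hle : Fintype.card Q * Nat.card N ≤ Fintype.card Q * 1 := by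
      rw [mul_one, ← hlag]
      exact hrank ▸ hcard
    exact Nat.le_of_mul_le_mul_left hle hQpos
  have hbot : N = ⊥ := AddSubgroup.eq_bot_of_card_le N hNle
  have : e ∈ N := h
  rwa [hbot, AddSubgroup.mem_bot] at this

theorem sumG (r : R) (hr : r ≠ 0) : (∑ t, χ (r * t)) = 0 := by
  classical
  rw [sumChar (fun t => χ (r * t)) (by
    intro a b
    show χ (r * (a + b)) = _
    rw [mul_add, AddChar.map_add_eq_mul]), if_neg]
  intro hall
  exact hr (rnd hχ hall)

theorem inner_sum_eq_card {n : ℕ} (C : Submodule R (Fin n → R)) [Fintype C]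
    (lam : C →ₗ[R] R) (c : Fin n → R) (h : ∀ x : C, lam x = (x : Fin n → R) ⬝ᵥ c) :
    (∑ x : C, χ (lam x - (x : Fin n → R) ⬝ᵥ c)) = (Fintype.card C : ℂ) := by
  have h1 : ∀ x : C, χ (lam x - (x : Fin n → R) ⬝ᵥ c) = 1 := fun x => by
    rw [h x, sub_self, AddChar.map_zero_eq_one]
  simp [h1, Finset.card_univ]

theorem inner_sum_eq_zero {n : ℕ} (C : Submodule R (Fin n → R)) [Fintype C]
    (lam : C →ₗ[R] R) (c : Fin n → R) (h : ¬ ∀ x : C, lam x = (x : Fin n → R) ⬝ᵥ c) :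
    (∑ x : C, χ (lam x - (x : Fin n → R) ⬝ᵥ c)) = 0 := by
  classical
  have hmul : ∀ a b : C,
      χ (lam (a + b) - ((a + b : C) : Fin n → R) ⬝ᵥ c) =
        χ (lam a - (a : Fin n → R) ⬝ᵥ c) * χ (lam b - (b : Fin n → R) ⬝ᵥ c) := by
    intro a b
    rw [← AddChar.map_add_eq_mul]
    congr 1
    rw [map_add, Submodule.coe_add, add_dotProduct]
    abel
  rw [sumChar _ hmul, if_neg]
  intro hall
  apply h
  intro x
  have hz : ∀ t : R, χ (t * (lam x - (x : Fin n → R) ⬝ᵥ c)) = 1 := by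
    intro t
    have h3 := hall (t • x)
    rw [LinearMap.map_smul, Submodule.coe_smul, smul_dotProduct, smul_eq_mul,
      smul_eq_mul, ← mul_sub] at h3
    exact h3
  exact sub_eq_zero.mp (lnd hχ hz)

/-- The key column-wise local–global lemma. -/
theorem key {n : ℕ} (C : Submodule R (Fin n → R)) (lam : C →ₗ[R] R) (j : Fin n)
    (H : ∀ x : C, ∃ c : Fin n → R, (∀ i : Fin n, i < j → c i = 0) ∧ IsUnit (c j) ∧
        lam x = (x : Fin n → R) ⬝ᵥ c) :
    ∃ c : Fin n → R, (∀ i : Fin n, i < j → c i = 0) ∧ IsUnit (c j) ∧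
      ∀ x : C, lam x = (x : Fin n → R) ⬝ᵥ c := by
  classical
  haveI : Fintype C := Fintype.ofFinite C
  haveI : Fintype Rˣ := Fintype.ofFinite Rˣ
  choose cf hc0 hcu hceq using H
  have hdot : ∀ (v w : Fin n → R), v ⬝ᵥ w = ∑ i, v i * w i := fun _ _ => rfl
  have cardRn_ne : ((Fintype.card R : ℂ)) ^ n ≠ 0 :=
    pow_ne_zero _ (Nat.cast_ne_zero.mpr Fintype.card_ne_zero)
  have hfact : ∀ (g : Fin n → R → ℂ),
      (∑ z : Fin n → R, ∏ i, g i (z i)) = ∏ i, ∑ t, g i t := by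
    intro g
    rw [Finset.prod_univ_sum, Fintype.piFinset_univ]
  have hexp : ∀ (x : C) (c : Fin n → R),
      χ (lam x - (x : Fin n → R) ⬝ᵥ c) =
        χ (lam x) * ∏ i, χ (-((x : Fin n → R) i * c i)) := by
    intro x c
    rw [sub_eq_add_neg, AddChar.map_add_eq_mul]
    congr 1
    rw [hdot, ← chi_sum]
    congr 1
    rw [← Finset.sum_neg_distrib]
  -- ### Phase 1 : a global column supported on `{i : j ≤ i}`
  have hex1 : ∃ z : Fin n → R,
      ∀ x : C, lam x = (x : Fin n → R) ⬝ᵥ (fun i => if i < j then 0 else z i) := by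
    by_contra hno1
    have hT0 : (∑ z : Fin n → R, ∑ x : C,
        χ (lam x - (x : Fin n → R) ⬝ᵥ (fun i => if i < j then 0 else z i))) = 0 :=
      Finset.sum_eq_zero (fun z _ =>
        inner_sum_eq_zero hχ C lam _ (fun hall => hno1 ⟨z, hall⟩))
    have hx : ∀ x : C, (∑ z : Fin n → R,
        χ (lam x - (x : Fin n → R) ⬝ᵥ (fun i => if i < j then 0 else z i))) =
        if (∀ i : Fin n, ¬ i < j → (x : Fin n → R) i = 0)
          then ((Fintype.card R : ℂ)) ^ n else 0 := by
      intro x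
      rw [Finset.sum_congr rfl (fun z _ => hexp x _), ← Finset.mul_sum,
        hfact (fun i t => χ (-((x : Fin n → R) i * (if i < j then 0 else t))))]
      split_ifs with hx0
      · have hlam0 : lam x = 0 := by
          rw [hceq x, hdot]
          apply Finset.sum_eq_zero
          intro i _
          by_cases hij : i < j
          · rw [hc0 x i hij, mul_zero]
          · rw [hx0 i hij, zero_mul]
        have hfac : ∀ i : Fin n,
            (∑ t, χ (-((x : Fin n → R) i * (if i < j then 0 else t)))) =
              (Fintype.card R : ℂ) := by
          intro i
          by_cases hij : i < j
          · simp [hij, Finset.card_univ]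
          · have h6 : (x : Fin n → R) i = 0 := hx0 i hij
            simp [hij, h6, Finset.card_univ]
        rw [Finset.prod_congr rfl (fun i _ => hfac i), Finset.prod_const, hlam0,
          AddChar.map_zero_eq_one, one_mul, Finset.card_univ, Fintype.card_fin]
      · push_neg at hx0
        obtain ⟨i0, hi0j, hi0⟩ := hx0
        have hfac0 : (∑ t, χ (-((x : Fin n → R) i0 * (if i0 < j then 0 else t)))) = 0 := by
          rw [Finset.sum_congr rfl
            (fun t _ => by rw [if_neg (not_lt.mpr hi0j), ← neg_mul])]
          exact sumG hχ _ (neg_ne_zero.mpr hi0)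
        rw [Finset.prod_eq_zero (Finset.mem_univ i0) hfac0, mul_zero]
    have hTval : (∑ x : C, (if (∀ i : Fin n, ¬ i < j → (x : Fin n → R) i = 0)
        then ((Fintype.card R : ℂ)) ^ n else 0)) = 0 := by
      rw [← Finset.sum_congr rfl (fun x _ => hx x), ← Finset.sum_comm, hT0]
    rw [Finset.sum_ite, Finset.sum_const, Finset.sum_const_zero, add_zero,
      nsmul_eq_mul] at hTval
    rcases mul_eq_zero.mp hTval with h' | h'
    · rw [Nat.cast_eq_zero, Finset.card_eq_zero] at h'
      have : (0 : C) ∈ Finset.filter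
          (fun x : C => ∀ i : Fin n, ¬ i < j → (x : Fin n → R) i = 0) Finset.univ := by
        simp
      rw [h'] at this
      exact absurd this (Finset.notMem_empty _)
    · exact cardRn_ne h'
  obtain ⟨zstar, hglob1⟩ := hex1
  set cstar : Fin n → R := fun i => if i < j then 0 else zstar i with hcstar
  -- ### facts about elements supported on `{i : i ≤ j}`
  have hb1 : ∀ x : C, (∀ i : Fin n, j < i → (x : Fin n → R) i = 0) →
      lam x = (x : Fin n → R) j * cstar j := by
    intro x hx
    rw [hglob1 x, hdot]
    apply Finset.sum_eq_single j
    · intro i _ hij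
      rcases lt_or_gt_of_ne hij with h7 | h7
      · rw [hcstar]; simp only [if_pos h7, mul_zero]
      · rw [hx i h7, zero_mul]
    · intro h7; exact absurd (Finset.mem_univ j) h7
  have hb2 : ∀ x : C, (∀ i : Fin n, j < i → (x : Fin n → R) i = 0) →
      lam x = (x : Fin n → R) j * (cf x j) := by
    intro x hx
    rw [hceq x, hdot]
    apply Finset.sum_eq_single j
    · intro i _ hij
      rcases lt_or_gt_of_ne hij with h7 | h7
      · rw [hc0 x i h7, mul_zero]
      · rw [hx i h7, zero_mul]
    · intro h7; exact absurd (Finset.mem_univ j) h7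
  -- ### Phase 2 : upgrading the diagonal coefficient to a unit
  have hex2 : ∃ (u : Rˣ) (z : Fin n → R), ∀ x : C, lam x =
      (x : Fin n → R) ⬝ᵥ (fun i => if i < j then 0 else if i = j then (u : R) else z i) := by
    by_contra hno2
    have hT0 : (∑ u : Rˣ, ∑ z : Fin n → R, ∑ x : C, χ (lam x - (x : Fin n → R) ⬝ᵥ
        (fun i => if i < j then 0 else if i = j then (u : R) else z i))) = 0 :=
      Finset.sum_eq_zero (fun u _ => Finset.sum_eq_zero (fun z _ =>
        inner_sum_eq_zero hχ C lam _ (fun hall => hno2 ⟨u, z, hall⟩)))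
    -- evaluation of the inner `z`-sum for fixed `x` and `u`
    have hxu : ∀ (x : C) (u : Rˣ), (∑ z : Fin n → R, χ (lam x - (x : Fin n → R) ⬝ᵥ
        (fun i => if i < j then 0 else if i = j then (u : R) else z i))) =
        if (∀ i : Fin n, j < i → (x : Fin n → R) i = 0)
          then ((Fintype.card R : ℂ)) ^ n * (χ (lam x) * χ (-((x : Fin n → R) j * (u : R))))
          else 0 := by
      intro x u
      rw [Finset.sum_congr rfl (fun z _ => hexp x _), ← Finset.mul_sum,
        hfact (fun i t => χ (-((x : Fin n → R) i *
          (if i < j then 0 else if i = j then (u : R) else t))))]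
      split_ifs with hx0
      · have hfac : ∀ i : Fin n,
            (∑ t, χ (-((x : Fin n → R) i *
              (if i < j then 0 else if i = j then (u : R) else t)))) =
            (Fintype.card R : ℂ) *
              (if i = j then χ (-((x : Fin n → R) j * (u : R))) else 1) := by
          intro i
          rcases lt_trichotomy i j with hij | hij | hij
          · rw [if_neg (ne_of_lt hij)]
            simp [hij, Finset.card_univ]
          · subst hij
            rw [if_pos rfl]
            simp [lt_irrefl, Finset.card_univ, Finset.sum_const, nsmul_eq_mul]
          · have h6 : (x : Fin n → R) i = 0 := hx0 i hij
            rw [if_neg (ne_of_gt hij)]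
            have h7 : ¬ i < j := not_lt_of_gt hij
            have h8 : i ≠ j := ne_of_gt hij
            simp [h7, h8, h6, Finset.card_univ]
        rw [Finset.prod_congr rfl (fun i _ => hfac i), Finset.prod_mul_distrib,
          Finset.prod_const, Finset.prod_ite_eq' Finset.univ j
            (fun _ => χ (-((x : Fin n → R) j * (u : R)))), if_pos (Finset.mem_univ j),
          Finset.card_univ, Fintype.card_fin]
        ring
      · push_neg at hx0
        obtain ⟨i0, hi0j, hi0⟩ := hx0
        have h7 : ¬ i0 < j := not_lt_of_gt hi0j
        have h8 : i0 ≠ j := ne_of_gt hi0j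
        have hfac0 : (∑ t, χ (-((x : Fin n → R) i0 *
            (if i0 < j then 0 else if i0 = j then (u : R) else t)))) = 0 := by
          rw [Finset.sum_congr rfl
            (fun t _ => by rw [if_neg h7, if_neg h8, ← neg_mul])]
          exact sumG hχ _ (neg_ne_zero.mpr hi0)
        rw [Finset.prod_eq_zero (Finset.mem_univ i0) hfac0, mul_zero]
    -- reindex the unit sum
    have husum : ∀ x : C, (∀ i : Fin n, j < i → (x : Fin n → R) i = 0) →
        (∑ u : Rˣ, χ (lam x) * χ (-((x : Fin n → R) j * (u : R)))) =
        ∑ w : Rˣ, χ (((x : Fin n → R) j * cstar j) * (1 - (w : R))) := by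
      intro x hx
      set v : Rˣ := (hcu x).unit with hv
      have hvspec : (v : R) = cf x j := (hcu x).unit_spec
      refine (Fintype.sum_equiv (Equiv.mulLeft v) _ _ ?_).symm
      intro w
      show χ (((x : Fin n → R) j * cstar j) * (1 - (w : R))) =
          χ (lam x) * χ (-((x : Fin n → R) j * ((v * w : Rˣ) : R)))
      have h9 : (x : Fin n → R) j * ((v * w : Rˣ) : R) =
          ((x : Fin n → R) j * cstar j) * (w : R) := by
        rw [Units.val_mul, ← mul_assoc, hvspec, ← hb2 x hx, hb1 x hx]
      rw [← AddChar.map_add_eq_mul]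
      congr 1
      rw [h9, hb1 x hx, mul_one_sub, sub_eq_add_neg]
    -- the submodule of `C` of elements supported on `{i : i ≤ j}`
    set S2 : Submodule R C :=
      { carrier := {x : C | ∀ i : Fin n, j < i → (x : Fin n → R) i = 0}
        add_mem' := by
          intro a b ha hb i hi
          simp only [Submodule.coe_add, Pi.add_apply]
          rw [ha i hi, hb i hi, add_zero]
        zero_mem' := by
          intro i hi
          show ((0 : C) : Fin n → R) i = 0
          rw [ZeroMemClass.coe_zero]
          rfl
        smul_mem' := by
          intro t a ha i hi
          simp only [Submodule.coe_smul, Pi.smul_apply, smul_eq_mul]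
          rw [ha i hi, mul_zero] } with hS2
    haveI : Fintype S2 := Fintype.ofFinite S2
    haveI : Nonempty S2 := ⟨0⟩
    -- the sum over `w` of nonnegative-integer-valued inner sums
    have hKw : ∀ w : Rˣ, (∑ x : C, (if (∀ i : Fin n, j < i → (x : Fin n → R) i = 0)
        then χ (((x : Fin n → R) j * cstar j) * (1 - (w : R))) else 0)) =
        ((if (∀ y : S2, χ ((((y : C) : Fin n → R) j * cstar j) * (1 - (w : R))) = 1)
          then Fintype.card S2 else 0 : ℕ) : ℂ) := by
      intro w
      have hconv : (∑ x : C, (if (∀ i : Fin n, j < i → (x : Fin n → R) i = 0)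
          then χ (((x : Fin n → R) j * cstar j) * (1 - (w : R))) else 0)) =
          ∑ y : S2, χ ((((y : C) : Fin n → R) j * cstar j) * (1 - (w : R))) := by
        have hmemiff : ∀ x : C, x ∈ Finset.univ.filter (fun x : C =>
            ∀ i : Fin n, j < i → (x : Fin n → R) i = 0) ↔ x ∈ S2 := by
          intro x
          simp only [Finset.mem_filter, Finset.mem_univ, true_and]
          exact Iff.rfl
        rw [← Finset.sum_filter]
        exact Finset.sum_subtype (p := fun x : C => x ∈ S2) _ hmemiff (fun x : C =>
          χ (((x : Fin n → R) j * cstar j) * (1 - (w : R))))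
      rw [hconv, sumChar _ ?_]
      · split_ifs with h9
        · simp [Finset.card_univ]
        · simp
      · intro a b
        have h10 : (((a + b : S2) : C) : Fin n → R) j = ((a : C) : Fin n → R) j
            + ((b : C) : Fin n → R) j := rfl
        rw [← AddChar.map_add_eq_mul]
        congr 1
        rw [h10, add_mul, add_mul]
    -- put everything together
    have hT2 : (∑ u : Rˣ, ∑ z : Fin n → R, ∑ x : C, χ (lam x - (x : Fin n → R) ⬝ᵥ
        (fun i => if i < j then 0 else if i = j then (u : R) else z i))) =
        ((Fintype.card R : ℂ)) ^ n * ∑ w : Rˣ,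
          ((if (∀ y : S2, χ ((((y : C) : Fin n → R) j * cstar j) * (1 - (w : R))) = 1)
            then Fintype.card S2 else 0 : ℕ) : ℂ) := by
      rw [Finset.sum_congr rfl (fun u _ => Finset.sum_comm)]
      rw [Finset.sum_congr rfl (fun u (_ : u ∈ Finset.univ) =>
        Finset.sum_congr rfl (fun x _ => hxu x u))]
      rw [Finset.sum_comm]
      have hxrow : ∀ x : C, (∑ u : Rˣ, if (∀ i : Fin n, j < i → (x : Fin n → R) i = 0)
          then ((Fintype.card R : ℂ)) ^ n * (χ (lam x) * χ (-((x : Fin n → R) j * (u : R))))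
          else 0) = ((Fintype.card R : ℂ)) ^ n *
            ∑ w : Rˣ, (if (∀ i : Fin n, j < i → (x : Fin n → R) i = 0)
              then χ (((x : Fin n → R) j * cstar j) * (1 - (w : R))) else 0) := by
        intro x
        by_cases hx : ∀ i : Fin n, j < i → (x : Fin n → R) i = 0
        · simp only [if_pos hx]
          rw [← Finset.mul_sum, husum x hx]
        · simp only [if_neg hx]
          simp
      rw [Finset.sum_congr rfl (fun x _ => hxrow x), ← Finset.mul_sum, Finset.sum_comm]
      congr 1
      exact Finset.sum_congr rfl (fun w _ => hKw w)
    rw [hT0] at hT2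
    -- contradiction : the right-hand side is nonzero
    have hsum_ne : (∑ w : Rˣ,
        ((if (∀ y : S2, χ ((((y : C) : Fin n → R) j * cstar j) * (1 - (w : R))) = 1)
          then Fintype.card S2 else 0 : ℕ) : ℂ)) ≠ 0 := by
      rw [← Nat.cast_sum, Nat.cast_ne_zero]
      intro hzero
      rw [Finset.sum_eq_zero_iff] at hzero
      have h1w := hzero 1 (Finset.mem_univ 1)
      rw [if_pos ?_] at h1w
      · exact Fintype.card_ne_zero h1w
      · intro y
        rw [Units.val_one, sub_self, mul_zero, AddChar.map_zero_eq_one]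
    exact hsum_ne (by
      rcases mul_eq_zero.mp hT2.symm with h' | h'
      · exact absurd h' cardRn_ne
      · exact h')
  obtain ⟨u, z, hglob2⟩ := hex2
  refine ⟨fun i => if i < j then 0 else if i = j then (u : R) else z i, ?_, ?_, hglob2⟩
  · intro i hij
    show (if i < j then (0:R) else if i = j then (u : R) else z i) = 0
    rw [if_pos hij]
  · show IsUnit (if j < j then (0:R) else if j = j then (u : R) else z j)
    rw [if_neg (lt_irrefl j), if_pos rfl]
    exact u.isUnit

end Char

end LTLG

/-- **Local-global property of `LT(n,R)`.**  Over a finite Frobenius ring `R`, every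
local `LT(n,R)`-map `f : C → R^n` on a code `C ⊆ R^n` (i.e. for every `x ∈ C` there is
an invertible lower triangular matrix `M_x` with `f(x) = x·M_x`) is a global
`LT(n,R)`-map: a single invertible lower triangular matrix `M` works for all `x ∈ C`. -/
theorem LT_local_global {R : Type*} [Ring R] [Fintype R] (hR : IsFrobeniusRing R)
    {n : ℕ} (C : Submodule R (Fin n → R)) (f : C →ₗ[R] (Fin n → R))
    (hf : ∀ x : C, ∃ M : (Matrix (Fin n) (Fin n) R)ˣ,
      (∀ i j : Fin n, i < j → M.val i j = 0) ∧
      f x = (x : Fin n → R) ᵥ* M.val) :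
    ∃ M : (Matrix (Fin n) (Fin n) R)ˣ,
      (∀ i j : Fin n, i < j → M.val i j = 0) ∧
      ∀ x : C, f x = (x : Fin n → R) ᵥ* M.val := by
  classical
  obtain ⟨χ, hχ⟩ := hR
  have hcol : ∀ j : Fin n, ∃ c : Fin n → R, (∀ i : Fin n, i < j → c i = 0) ∧ IsUnit (c j) ∧
      ∀ x : C, ((LinearMap.proj j).comp f) x = (x : Fin n → R) ⬝ᵥ c := by
    intro j
    apply LTLG.key hχ C ((LinearMap.proj j).comp f) j
    intro x
    obtain ⟨Mx, htri, heq⟩ := hf x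
    refine ⟨fun i => Mx.val i j, fun i hij => htri i j hij, ?_, ?_⟩
    · exact LTLG.diag_isUnit Mx.val ⟨Mx, rfl⟩ htri j
    · show f x j = _
      rw [heq]
      rfl
  choose col hcol0 hcolu hcoleq using hcol
  set Mmat : Matrix (Fin n) (Fin n) R := Matrix.of (fun i j => col j i) with hM
  have htri : ∀ i j : Fin n, i < j → Mmat i j = 0 := fun i j hij => hcol0 j i hij
  have hdiag : ∀ i, IsUnit (Mmat i i) := fun i => hcolu i
  obtain ⟨U, hU⟩ := LTLG.isUnit_lowerTriangular Mmat htri hdiag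
  refine ⟨U, ?_, ?_⟩
  · rw [hU]
    exact htri
  · intro x
    rw [hU]
    funext j
    show f x j = (x : Fin n → R) ⬝ᵥ (fun i => Mmat i j)
    exact hcoleq j x
end
end

section
/- Let R be a finite Frobenius ring (i.e., a finite ring admitting a generating character) and let Δ(n,R) be the group of invertible diagonal n×n matrices over R. Then Δ(n,R) satisfies the local-global property: every local Δ(n,R)-map f : C → R^n defined on a code C ⊆ R^n is a global Δ(n,R)-map. -/
open Matrix

noncomputable section

/-- Uniqueness at the trivial character: if `χ (s * t) = 1` for all `s`, then `t = 0`. -/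
lemma IsGeneratingChar.eq_zero {R : Type*} [Ring R] [Fintype R] {χ : AddChar R ℂ}
    (hχ : IsGeneratingChar χ) {t : R} (h : ∀ s : R, χ (s * t) = 1) : t = 0 := by
  obtain ⟨r, -, hu⟩ := hχ 1
  have h1 : t = r := hu t fun x => (h x).symm
  have h2 : (0 : R) = r := hu 0 fun x => by simp
  rw [h1, ← h2]

/-- The key one-functional local-global lemma over a Frobenius ring:
if a linear functional `φ` agrees pointwise with `ψ` up to a right unit factor,
then there is one single unit working globally. -/
lemma key_local_global {R : Type*} [Ring R] [Fintype R] (hR : IsFrobeniusRing R)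
    {M : Type*} [AddCommGroup M] [Module R M] [Finite M]
    (φ ψ : M →ₗ[R] R) (h : ∀ x : M, ∃ u : Rˣ, φ x = ψ x * u) :
    ∃ u : Rˣ, ∀ x : M, φ x = ψ x * u := by
  classical
  obtain ⟨χ, hχ⟩ := hR
  letI : Fintype M := Fintype.ofFinite M
  set c : ℂ := (Fintype.card M : ℂ) with hc
  have hc0 : c ≠ 0 := by
    simp [hc, Fintype.card_ne_zero]
  -- the two families of additive characters of M
  have mkhom : ∀ t : M → R, (∀ a b : M, t (a + b) = t a + t b) → (M →+ R) := by
    intro t ht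
    exact AddMonoidHom.mk' t ht
  -- predicates
  set P : Rˣ → Prop := fun u => ∀ x : M, φ x = ψ x * (u : R) with hP
  set P' : Rˣ → Prop := fun v => ∀ x : M, φ x * (1 - (v : R)) = 0 with hP'
  -- Lemma A
  have lemA : ∀ u : Rˣ, (∑ x : M, χ (φ x - ψ x * (u : R))) = if P u then c else 0 := by
    intro u
    have hadd : ∀ a b : M, (φ (a + b) - ψ (a + b) * (u : R))
        = (φ a - ψ a * (u : R)) + (φ b - ψ b * (u : R)) := by
      intro a b
      simp only [map_add, add_mul]
      abel
    set g : M →+ R := AddMonoidHom.mk' (fun x => φ x - ψ x * (u : R)) hadd with hg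
    set θ : AddChar M ℂ := χ.compAddMonoidHom g with hθ
    have happ : ∀ x : M, θ x = χ (φ x - ψ x * (u : R)) := fun x => rfl
    by_cases hPu : P u
    · rw [if_pos hPu]
      calc (∑ x : M, χ (φ x - ψ x * (u : R)))
          = ∑ _x : M, (1 : ℂ) := by
            refine Finset.sum_congr rfl fun x _ => ?_
            rw [hPu x]
            simp
        _ = c := by simp [hc]
    · have hθ1 : θ ≠ 1 := by
        intro hone
        apply hPu
        intro x
        have key : ∀ s : R, χ (s * (φ x - ψ x * (u : R))) = 1 := by
          intro s
          have : s * (φ x - ψ x * (u : R)) = φ (s • x) - ψ (s • x) * (u : R) := by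
            rw [LinearMap.map_smul, LinearMap.map_smul, smul_eq_mul, smul_eq_mul,
              mul_sub, mul_assoc]
          rw [this, ← happ, hone]
          simp
        have := hχ.eq_zero key
        rw [sub_eq_zero] at this
        exact this
      rw [if_neg hPu]
      calc (∑ x : M, χ (φ x - ψ x * (u : R))) = ∑ x : M, θ x := by
            simp only [happ]
        _ = 0 := AddChar.sum_eq_zero_of_ne_one hθ1
  -- Lemma B
  have lemB : ∀ v : Rˣ, (∑ x : M, χ (φ x * (1 - (v : R)))) = if P' v then c else 0 := by
    intro v
    have hadd : ∀ a b : M, (φ (a + b) * (1 - (v : R)))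
        = (φ a * (1 - (v : R))) + (φ b * (1 - (v : R))) := by
      intro a b
      simp only [map_add, add_mul]
    set g : M →+ R := AddMonoidHom.mk' (fun x => φ x * (1 - (v : R))) hadd with hg
    set θ : AddChar M ℂ := χ.compAddMonoidHom g with hθ
    have happ : ∀ x : M, θ x = χ (φ x * (1 - (v : R))) := fun x => rfl
    by_cases hPv : P' v
    · rw [if_pos hPv]
      calc (∑ x : M, χ (φ x * (1 - (v : R))))
          = ∑ _x : M, (1 : ℂ) := by
            refine Finset.sum_congr rfl fun x _ => ?_
            rw [hPv x]
            simp
        _ = c := by simp [hc]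
    · have hθ1 : θ ≠ 1 := by
        intro hone
        apply hPv
        intro x
        have key : ∀ s : R, χ (s * (φ x * (1 - (v : R)))) = 1 := by
          intro s
          have : s * (φ x * (1 - (v : R))) = φ (s • x) * (1 - (v : R)) := by
            rw [LinearMap.map_smul, smul_eq_mul, mul_assoc]
          rw [this, ← happ, hone]
          simp
        exact hχ.eq_zero key
      rw [if_neg hPv]
      calc (∑ x : M, χ (φ x * (1 - (v : R)))) = ∑ x : M, θ x := by
            simp only [happ]
        _ = 0 := AddChar.sum_eq_zero_of_ne_one hθ1
  -- Lemma C : reindexing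
  have lemC : ∀ x : M, (∑ u : Rˣ, χ (φ x - ψ x * (u : R)))
      = ∑ v : Rˣ, χ (φ x * (1 - (v : R))) := by
    intro x
    obtain ⟨w, hw⟩ := h x
    refine (Fintype.sum_equiv (Equiv.mulLeft w)
      (fun v : Rˣ => χ (φ x * (1 - (v : R))))
      (fun u : Rˣ => χ (φ x - ψ x * (u : R))) fun v => ?_).symm
    show χ (φ x * (1 - (v : R))) = χ (φ x - ψ x * ((w * v : Rˣ) : R))
    congr 1
    rw [Units.val_mul, hw, mul_sub, mul_one, ← mul_assoc]
  -- main computation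
  have main : ((Finset.univ.filter P).card : ℂ) * c
      = ((Finset.univ.filter P').card : ℂ) * c := by
    calc ((Finset.univ.filter P).card : ℂ) * c
        = ∑ u : Rˣ, if P u then c else 0 := by
          rw [← Finset.sum_filter, Finset.sum_const, nsmul_eq_mul]
      _ = ∑ u : Rˣ, ∑ x : M, χ (φ x - ψ x * (u : R)) := by
          simp only [lemA]
      _ = ∑ x : M, ∑ u : Rˣ, χ (φ x - ψ x * (u : R)) := Finset.sum_comm
      _ = ∑ x : M, ∑ v : Rˣ, χ (φ x * (1 - (v : R))) := by
          simp only [lemC]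
      _ = ∑ v : Rˣ, ∑ x : M, χ (φ x * (1 - (v : R))) := Finset.sum_comm
      _ = ∑ v : Rˣ, if P' v then c else 0 := by
          simp only [lemB]
      _ = ((Finset.univ.filter P').card : ℂ) * c := by
          rw [← Finset.sum_filter, Finset.sum_const, nsmul_eq_mul]
  have hcard : (Finset.univ.filter P).card = (Finset.univ.filter P').card := by
    have := mul_right_cancel₀ hc0 main
    exact_mod_cast this
  have hone : (1 : Rˣ) ∈ Finset.univ.filter P' := by
    simp only [Finset.mem_filter, Finset.mem_univ, true_and]
    intro x
    simp [hP']
  have hpos : 0 < (Finset.univ.filter P).card := by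
    rw [hcard]
    exact Finset.card_pos.mpr ⟨1, hone⟩
  obtain ⟨u, hu⟩ := Finset.card_pos.mp hpos
  exact ⟨u, (Finset.mem_filter.mp hu).2⟩

/-- **Local-global property of `Δ(n,R)`.**  Over a finite Frobenius ring `R`, every
local `Δ(n,R)`-map `f : C → R^n` on a code `C ⊆ R^n` (pointwise given by invertible
diagonal matrices) is a global `Δ(n,R)`-map. -/
theorem diagonal_local_global {R : Type*} [Ring R] [Fintype R] (hR : IsFrobeniusRing R)
    {n : ℕ} (C : Submodule R (Fin n → R)) (f : C →ₗ[R] (Fin n → R))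
    (hf : ∀ x : C, ∃ M : (Matrix (Fin n) (Fin n) R)ˣ,
      (∀ i j : Fin n, i ≠ j → M.val i j = 0) ∧
      f x = (x : Fin n → R) ᵥ* M.val) :
    ∃ M : (Matrix (Fin n) (Fin n) R)ˣ,
      (∀ i j : Fin n, i ≠ j → M.val i j = 0) ∧
      ∀ x : C, f x = (x : Fin n → R) ᵥ* M.val := by
  classical
  -- per-coordinate application of the key lemma
  have H : ∀ i : Fin n, ∃ u : Rˣ, ∀ x : C, f x i = (x : Fin n → R) i * u := by
    intro i
    have := key_local_global hR
      ((LinearMap.proj i).comp f) ((LinearMap.proj i).comp C.subtype) ?_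
    · obtain ⟨u, hu⟩ := this
      exact ⟨u, fun x => hu x⟩
    · intro x
      obtain ⟨Mx, hdiag, heq⟩ := hf x
      -- f x i = x i * Mx i i
      have hfx : f x i = (x : Fin n → R) i * Mx.val i i := by
        rw [heq]
        show (∑ j, (x : Fin n → R) j * Mx.val j i) = _
        rw [Finset.sum_eq_single i]
        · intro j _ hj
          rw [hdiag j i hj, mul_zero]
        · intro hi
          exact absurd (Finset.mem_univ i) hi
      -- the diagonal entry is a unit
      have h1 : Mx.val i i * (Mx⁻¹).val i i = 1 := by
        have := congrArg (fun A : Matrix (Fin n) (Fin n) R => A i i) Mx.mul_inv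
        simp only [Matrix.mul_apply, Matrix.one_apply_eq] at this
        rwa [Finset.sum_eq_single i
          (fun k _ hk => by rw [hdiag i k (Ne.symm hk), zero_mul])
          (fun hi => absurd (Finset.mem_univ i) hi)] at this
      have h2 : (Mx⁻¹).val i i * Mx.val i i = 1 := by
        have := congrArg (fun A : Matrix (Fin n) (Fin n) R => A i i) Mx.inv_mul
        simp only [Matrix.mul_apply, Matrix.one_apply_eq] at this
        rwa [Finset.sum_eq_single i
          (fun k _ hk => by rw [hdiag k i hk, mul_zero])
          (fun hi => absurd (Finset.mem_univ i) hi)] at this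
      exact ⟨⟨Mx.val i i, (Mx⁻¹).val i i, h1, h2⟩, hfx⟩
  choose us hus using H
  refine ⟨⟨Matrix.diagonal (fun i => (us i : R)),
          Matrix.diagonal (fun i => ((us i)⁻¹ : Rˣ)), ?_, ?_⟩, ?_, ?_⟩
  · rw [Matrix.diagonal_mul_diagonal]
    simp only [Units.mul_inv]
    exact Matrix.diagonal_one
  · rw [Matrix.diagonal_mul_diagonal]
    simp only [Units.inv_mul]
    exact Matrix.diagonal_one
  · intro i j hij
    exact Matrix.diagonal_apply_ne _ hij
  · intro x
    funext i
    show f x i = ((x : Fin n → R) ᵥ* Matrix.diagonal (fun i => (us i : R))) i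
    rw [Matrix.vecMul_diagonal]
    exact hus i x
end
end

section
/- Let R be a finite Frobenius ring (i.e., a finite ring admitting a generating character) and let U be a subgroup of the multiplicative group of units R^×. Then the group Mon_U(n,R) of monomial n×n matrices over R whose nonzero entries lie in U satisfies the local-global property: every local Mon_U(n,R)-map f : C → R^n defined on a code C ⊆ R^n is a global Mon_U(n,R)-map. -/
open Matrix

noncomputable section

/-- `M ∈ Mon_U(n,R)`: `M` is a monomial matrix (exactly one nonzero entry in each row
and column, all of them units) whose nonzero entries lie in the subgroup `U ≤ R^×`. -/
def IsMonomialU {R : Type*} [Ring R] {n : ℕ} (U : Subgroup Rˣ)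
    (M : Matrix (Fin n) (Fin n) R) : Prop :=
  ∃ (σ : Equiv.Perm (Fin n)) (d : Fin n → Rˣ), (∀ i, d i ∈ U) ∧
    ∀ i j, M i j = if j = σ i then (d i : R) else 0

/-!
Let `λᵢ` be the coordinate functionals of `C` and `μⱼ` the coordinates of `f`, elements of
`Hom_R(C, R)`, on which `U` acts by right multiplication. Locality says that for every `x ∈ C`
the multisets `{xᵢ u}` and `{f(x)ⱼ u}` (over `i` and `u ∈ U`) coincide. Summing a generating
character `χ` over them, the functions `∑ χ ∘ (λᵢ u)` and `∑ χ ∘ (μⱼ u)` on `C` coincide. Since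
`χ` is generating, `φ ↦ χ ∘ φ` is injective, so these are sums of distinct, hence linearly
independent, characters of `C`, and the multisets `{λᵢ u}` and `{μⱼ u}` coincide. Passing to
`U`-orbits matches each `λᵢ` with some `μ_{σ i} = λᵢ uᵢ`, and `(σ, u)` is the global monomial
matrix.
-/

theorem Matrix.vecMul_apply_perm_of_monomial {ι R : Type*} [Fintype ι] [DecidableEq ι]
    [NonUnitalNonAssocSemiring R] {M : Matrix ι ι R} {σ : Equiv.Perm ι} {d : ι → R}
    (hM : ∀ i j, M i j = if j = σ i then d i else 0) (x : ι → R) (i : ι) :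
    (x ᵥ* M) (σ i) = x i * d i := by
  rw [vecMul, dotProduct, Fintype.sum_eq_single i fun k hk => by simp [hM, hk.symm]]
  simp [hM]

theorem Multiset.sum_map_apply {α β γ : Type*} [AddCommMonoid γ] (s : Multiset α)
    (F : α → β → γ) (b : β) : (s.map F).sum b = (s.map fun a => F a b).sum :=
  (map_multiset_sum (Pi.evalAddMonoidHom (fun _ => γ) b) (s.map F)).trans <| by
    rw [Multiset.map_map]; rfl

theorem Fintype.exists_perm_of_map_univ_eq {ι α : Type*} [Fintype ι] {f g : ι → α}
    (h : Finset.univ.val.map f = Finset.univ.val.map g) :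
    ∃ σ : Equiv.Perm ι, ∀ i, g (σ i) = f i := by
  classical
  have hfib (a : α) : Fintype.card {i // f i = a} = Fintype.card {i // g i = a} := by
    have := congr_arg (Multiset.count a) h
    simp only [Multiset.count_map, eq_comm (a := a)] at this
    rwa [Fintype.card_subtype, Fintype.card_subtype]
  exact ⟨Equiv.ofFiberEquiv fun a => Fintype.equivOfCardEq (hfib a), Equiv.ofFiberEquiv_map _⟩

theorem LinearIndependent.eq_of_multiset_sum_map_eq {ι M : Type*} [AddCommMonoid M] {v : ι → M}
    (hv : LinearIndependent ℕ v) {s t : Multiset ι} (h : (s.map v).sum = (t.map v).sum) :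
    s = t := by
  classical
  have sum_eq (s : Multiset ι) : (s.map v).sum = Finsupp.linearCombination ℕ v s.toFinsupp := by
    induction s using Multiset.induction_on with
    | empty => simp
    | cons a s ih =>
      simp [ih, ← Multiset.singleton_add, Multiset.toFinsupp_add, Multiset.toFinsupp_singleton]
  rw [sum_eq, sum_eq] at h
  exact Multiset.toFinsupp.injective (hv h)

namespace MulAction
variable (G : Type*) {X Y ι : Type*} [Group G] [Fintype G] [MulAction G X] [MulAction G Y]
  [Fintype ι]

def orbitMultiset (v : ι → X) : Multiset X :=
  ∑ i, Finset.univ.val.map fun g : G => g • v i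

variable {G}

theorem orbitMultiset_map (F : X → Y) (hF : ∀ (g : G) x, F (g • x) = g • F x) (v : ι → X) :
    (orbitMultiset G v).map F = orbitMultiset G fun i => F (v i) := by
  simp only [orbitMultiset, ← Multiset.coe_mapAddMonoidHom, map_sum]
  simp [Multiset.map_map, hF]

theorem orbitMultiset_eq_of_perm {v w : ι → X} (σ : Equiv.Perm ι) (g : ι → G)
    (h : ∀ i, w (σ i) = g i • v i) : orbitMultiset G v = orbitMultiset G w := by
  rw [orbitMultiset, orbitMultiset]
  conv_rhs => rw [← Equiv.sum_comp σ]
  refine Fintype.sum_congr _ _ fun i => ?_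
  simp only [h, smul_smul]
  conv_lhs => rw [← Multiset.map_univ_val_equiv (Equiv.mulRight (g i)), Multiset.map_map]
  rfl

theorem orbitMultiset_map_mk (v : ι → X) :
    (orbitMultiset G v).map (Quotient.mk (orbitRel G X)) =
      Fintype.card G • Finset.univ.val.map fun i => Quotient.mk (orbitRel G X) (v i) := by
  rw [orbitMultiset, ← Multiset.coe_mapAddMonoidHom, map_sum]
  simp only [Multiset.coe_mapAddMonoidHom, Multiset.map_map, Function.comp_def,
    orbitRel.Quotient.quotient_smul_eq, Multiset.map_const', ← Multiset.nsmul_singleton,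
    ← Finset.smul_sum]
  rw [Finset.sum_eq_multiset_sum]
  conv_rhs => rw [← Multiset.sum_map_singleton (Multiset.map _ _), Multiset.map_map]
  rfl

theorem exists_perm_of_orbitMultiset_eq {v w : ι → X}
    (h : orbitMultiset G v = orbitMultiset G w) :
    ∃ σ : Equiv.Perm ι, ∀ i, ∃ g : G, w (σ i) = g • v i := by
  have h' := congr_arg (Multiset.map (Quotient.mk (orbitRel G X))) h
  rw [orbitMultiset_map_mk, orbitMultiset_map_mk] at h'
  obtain ⟨σ, hσ⟩ :=
    Fintype.exists_perm_of_map_univ_eq (nsmul_right_injective Fintype.card_ne_zero h')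
  exact ⟨σ, fun i => (Quotient.exact (hσ i)).imp fun _ => Eq.symm⟩

end MulAction

namespace IsGeneratingChar
variable {R : Type*} [Ring R] [Fintype R] {χ : AddChar R ℂ}

theorem eq_zero_of_forall_mul_eq_one (hχ : IsGeneratingChar χ) {a : R}
    (h : ∀ x, χ (x * a) = 1) : a = 0 := by
  obtain ⟨r, -, hr⟩ := hχ 1
  exact (hr a fun x => (h x).symm).trans (hr 0 fun x => by simp).symm

theorem comp_linearMap_injective (hχ : IsGeneratingChar χ) (M : Type*) [AddCommGroup M]
    [Module R M] :
    Function.Injective fun φ : M →ₗ[R] R => χ.compAddMonoidHom φ.toAddMonoidHom := by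
  intro φ φ' h
  ext m
  rw [← sub_eq_zero]
  refine hχ.eq_zero_of_forall_mul_eq_one fun x => ?_
  have : χ (x * φ m) = χ (x * φ' m) := by simpa using DFunLike.congr_fun h (x • m)
  rw [mul_sub, AddChar.map_sub_eq_div, this, div_self (χ.val_isUnit _).ne_zero]

theorem linearIndependent_comp_linearMap (hχ : IsGeneratingChar χ) (M : Type*) [AddCommGroup M]
    [Module R M] [Finite M] : LinearIndependent ℂ fun (φ : M →ₗ[R] R) (m : M) => χ (φ m) :=
  (AddChar.linearIndependent M ℂ).comp (fun φ : M →ₗ[R] R => χ.compAddMonoidHom φ.toAddMonoidHom)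
    (hχ.comp_linearMap_injective M)

open MulAction in
theorem orbitMultiset_eq_of_forall_apply (hχ : IsGeneratingChar χ) {G M ι : Type*} [Group G]
    [Fintype G] [Fintype ι] [AddCommGroup M] [Module R M] [Finite M] [MulAction G R]
    [MulAction G (M →ₗ[R] R)] (hG : ∀ (g : G) (φ : M →ₗ[R] R) m, (g • φ) m = g • φ m)
    {v w : ι → M →ₗ[R] R}
    (h : ∀ m, orbitMultiset G (fun i => v i m) = orbitMultiset G fun i => w i m) :
    orbitMultiset G v = orbitMultiset G w := by
  have hsum (u : ι → M →ₗ[R] R) (m : M) :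
      ((orbitMultiset G u).map fun φ m => χ (φ m)).sum m =
        ((orbitMultiset G fun i => u i m).map χ).sum := by
    have heval : (orbitMultiset G u).map (fun φ => φ m) = orbitMultiset G fun i => u i m :=
      orbitMultiset_map _ (hG · · m) u
    rw [Multiset.sum_map_apply, ← heval, Multiset.map_map]
    rfl
  refine ((hχ.linearIndependent_comp_linearMap M).restrict_scalars' ℕ).eq_of_multiset_sum_map_eq ?_
  funext m
  rw [hsum, hsum, h]

end IsGeneratingChar

open MulAction in
/-- **Local-global property of `Mon_U(n,R)`.**  Over a finite Frobenius ring `R` and a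
subgroup `U ≤ R^×`, every local `Mon_U(n,R)`-map `f : C → R^n` on a code `C ⊆ R^n` is a
global `Mon_U(n,R)`-map. -/
theorem monomialU_local_global {R : Type*} [Ring R] [Fintype R]
    (hR : IsFrobeniusRing R) (U : Subgroup Rˣ) {n : ℕ}
    (C : Submodule R (Fin n → R)) (f : C →ₗ[R] (Fin n → R))
    (hf : ∀ x : C, ∃ M : Matrix (Fin n) (Fin n) R,
      IsMonomialU U M ∧ f x = (x : Fin n → R) ᵥ* M) :
    ∃ M : Matrix (Fin n) (Fin n) R,
      IsMonomialU U M ∧ ∀ x : C, f x = (x : Fin n → R) ᵥ* M := by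
  classical
  obtain ⟨χ, hχ⟩ := hR
  let : Fintype Uᵐᵒᵖ := .ofEquiv U MulOpposite.opEquiv
  let toOp : Uᵐᵒᵖ →* Rᵐᵒᵖ := ((Units.coeHom R).comp U.subtype).op
  let : MulAction Uᵐᵒᵖ R := MulAction.compHom R toOp
  let : MulAction Uᵐᵒᵖ (C →ₗ[R] R) := MulAction.compHom _ toOp
  have hlocal (x : C) : orbitMultiset Uᵐᵒᵖ (x : Fin n → R) = orbitMultiset Uᵐᵒᵖ (f x) := by
    obtain ⟨M, ⟨σ, d, hdU, hM⟩, hfx⟩ := hf x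
    exact orbitMultiset_eq_of_perm σ (fun i => .op ⟨d i, hdU i⟩) fun i => by
      rw [hfx, vecMul_apply_perm_of_monomial hM]; rfl
  obtain ⟨σ, hσ⟩ := exists_perm_of_orbitMultiset_eq <|
    hχ.orbitMultiset_eq_of_forall_apply (fun _ _ _ => rfl)
      (v := fun i => (LinearMap.proj i).comp C.subtype) (w := fun i => (LinearMap.proj i).comp f)
      hlocal
  choose u hu using hσ
  let M : Matrix (Fin n) (Fin n) R := .of fun i j => if j = σ i then (((u i).unop : Rˣ) : R) else 0
  have hM (i j : Fin n) : M i j = if j = σ i then (((u i).unop : Rˣ) : R) else 0 := rfl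
  refine ⟨M, ⟨σ, fun i => (u i).unop, fun i => (u i).unop.2, hM⟩, fun x => funext fun j => ?_⟩
  obtain ⟨i, rfl⟩ := σ.surjective j
  rw [vecMul_apply_perm_of_monomial hM]
  exact LinearMap.congr_fun (hu i) x
end
end

section
/- Let R be a finite Frobenius ring (i.e., a finite ring admitting a generating character), let C ⊆ R^n be a code, and let f : C → R^n be a left R-linear map preserving the Rosenbloom–Tsfasman weight, i.e., wt_RT(f(x)) = wt_RT(x) for all x ∈ C. Then f is a global LT(n,R)-map: there exists an invertible lower triangular matrix M ∈ LT(n,R) such that f(x) = x·M for all x ∈ C. In particular, f extends to a wt_RT-preserving R-linear automorphism of R^n. -/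
/-!
A generating character `χ` makes `R` self-injective (Baer's criterion): for a linear map
`φ : I → R` on a left ideal, `χ ∘ φ` extends to an additive character of `R` because `ℂˣ` is
divisible, and that character is `x ↦ χ (x * r)`; nondegeneracy of `χ` gives `φ x = x * r`.
Over a finite self-injective ring an injective linear map from a left ideal to `R` is right
multiplication by a unit: more generally, in a finite injective module `M` an injective map
`I → M` extends to an automorphism, by enlarging step by step, along a chain of covering
submodules, the submodule on which the extension is injective.

Column `k` of the matrix comes from `x ↦ f x k`. On codewords supported in the first `k + 1`
coordinates, `x k` and `f x k` vanish together because `f` preserves `wtRT`, so there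
`f x k = x k * u` with `u` a unit; the remainder `f x k - x k * u` then depends only on the
coordinates above `k` and extends to a linear form on `R^n`. The resulting lower-triangular
matrix has unit diagonal, hence preserves `wtRT`, so it acts injectively, hence bijectively, on
the finite module `R^n`.
-/

open Matrix
open scoped Classical

noncomputable section

/-- The Rosenbloom–Tsfasman weight: `wt_RT(x) = 0` if `x = 0`, and otherwise the largest
(1-based) index `i` with `x_i ≠ 0`. -/
def wtRT {R : Type*} [Ring R] {n : ℕ} (x : Fin n → R) : ℕ :=
  (Finset.univ.filter fun i : Fin n => x i ≠ 0).sup fun i : Fin n => (i : ℕ) + 1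

theorem AddChar.exists_comp_eq_of_injective {A B : Type*} [AddCommGroup A] [AddCommGroup B]
    (ι : B →+ A) (hι : Function.Injective ι) (ψ : AddChar B ℂ) :
    ∃ Ψ : AddChar A ℂ, ∀ b, Ψ (ι b) = ψ b := by
  let : DivisibleBy (Additive ℂˣ) ℕ := divisibleByOfSMulRightSurj _ _ fun {n} hn x => by
    obtain ⟨z, hz⟩ := IsAlgClosed.exists_pow_nat_eq (x.toMul : ℂ) (Nat.pos_of_ne_zero hn)
    have hz0 : z ≠ 0 := by
      rintro rfl
      exact x.toMul.ne_zero (by simpa [zero_pow hn] using hz.symm)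
    exact ⟨.ofMul (Units.mk0 z hz0), Additive.toMul.injective (Units.ext (by simpa using hz))⟩
  let := AddGroup.divisibleByIntOfDivisibleByNat (Additive ℂˣ)
  let g : B →+ Additive ℂˣ :=
    MonoidHom.toAdditiveRight (AddChar.toMonoidHom ψ).toHomUnits
  obtain ⟨G, hG⟩ :=
    (Module.Baer.of_divisible (A := Additive ℂˣ)).extension_property_addMonoidHom ι hι g
  refine ⟨AddChar.toAddMonoidHomEquiv.symm ((Units.coeHom ℂ).toAdditive.comp G), fun b => ?_⟩
  simpa [g] using congrArg (fun h => ((h b).toMul : ℂ)) hG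

namespace IsGeneratingChar

variable {R : Type*} [Ring R] [Fintype R] {χ : AddChar R ℂ}

theorem eq_of_forall_apply_mul_eq (hχ : IsGeneratingChar χ) {a b : R}
    (h : ∀ s, χ (s * a) = χ (s * b)) : a = b :=
  (hχ (χ.compAddMonoidHom (AddMonoidHom.mulRight a))).unique (fun _ => rfl) (fun s => h s)

theorem moduleBaer (hχ : IsGeneratingChar χ) : Module.Baer R R := by
  intro I φ
  obtain ⟨Ψ, hΨ⟩ := AddChar.exists_comp_eq_of_injective I.subtype.toAddMonoidHom
    Subtype.val_injective (χ.compAddMonoidHom φ.toAddMonoidHom)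
  obtain ⟨r, hr, -⟩ := hχ Ψ
  refine ⟨LinearMap.toSpanSingleton R R r, fun x hx => hχ.eq_of_forall_apply_mul_eq fun s => ?_⟩
  calc χ (s * (x • r)) = Ψ (s * x) := by rw [hr, smul_eq_mul, mul_assoc]
    _ = χ (φ (s • ⟨x, hx⟩)) := hΨ (s • ⟨x, hx⟩)
    _ = χ (s * φ ⟨x, hx⟩) := by rw [map_smul, smul_eq_mul]

theorem moduleInjective (hχ : IsGeneratingChar χ) : Module.Injective R R :=
  hχ.moduleBaer.injective

end IsGeneratingChar

section FiniteInjective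

open LinearMap Submodule

variable {R M : Type*} [Ring R] [AddCommGroup M] [Module R M]

/-- Otherwise composing with the inverse of `J ≃ range g` would embed `Hom(K, M)` into itself as
maps landing in `J`, and by finiteness the inclusion of `K` would be one of them. -/
theorem exists_range_not_le_range [Finite M] {K J : Submodule R M} (hKJ : ¬ K ≤ J)
    (g : J →ₗ[R] M) (hg : Function.Injective g) :
    ∃ θ : K →ₗ[R] M, ¬ range θ ≤ range g := by
  by_contra! h
  let e := LinearEquiv.ofInjective g hg
  let Φ : (K →ₗ[R] M) → (K →ₗ[R] M) := fun θ =>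
    J.subtype ∘ₗ e.symm.toLinearMap ∘ₗ θ.codRestrict (range g) (fun k => h θ ⟨k, rfl⟩)
  have hΦ : Function.Injective Φ := by
    intro θ₁ θ₂ hθ
    ext k
    have := e.symm.injective (Subtype.ext (LinearMap.congr_fun hθ k))
    exact congrArg Subtype.val this
  have : Finite (K →ₗ[R] M) := Finite.of_injective _ DFunLike.coe_injective
  obtain ⟨θ, hθ⟩ := Finite.injective_iff_surjective.mp hΦ K.subtype
  refine hKJ fun k hk => ?_
  have hk' : Φ θ ⟨k, hk⟩ = k := by rw [hθ]; rfl
  exact hk' ▸ (e.symm _).2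

theorem IsAtom.eq_zero_of_apply_mem {K P : Submodule R M} (hK : IsAtom K) {θ : K →ₗ[R] M}
    (hθ : ¬ range θ ≤ P) {k : K} (hk : θ k ∈ P) : k = 0 := by
  by_contra hk0
  have hspan : R ∙ (k : M) = K :=
    (hK.le_iff.mp ((span_singleton_le_iff_mem _ _).mpr k.2)).resolve_left
      (by simpa [span_singleton_eq_bot] using hk0)
  refine hθ ?_
  rintro _ ⟨k', rfl⟩
  obtain ⟨a, ha⟩ := mem_span_singleton.mp (hspan.symm ▸ k'.2 : (k' : M) ∈ R ∙ (k : M))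
  rw [show k' = a • k from Subtype.ext ha.symm, map_smul]
  exact P.smul_mem a hk

theorem exists_disjoint_ker_add_of_covBy [Finite M] [Module.Injective R M]
    {J₀ J : Submodule R M} (hJ : J₀ ⋖ J) {g : M →ₗ[R] M} (hg : Disjoint (ker g) J₀) :
    ∃ h : M →ₗ[R] M, J₀ ≤ ker h ∧ Disjoint (ker (g + h)) J := by
  set K := ker g ⊓ J
  by_cases hK : K = ⊥
  · exact ⟨0, by simp, by simpa [disjoint_iff] using hK⟩
  have hKJ₀ : Disjoint K J₀ := hg.mono_left inf_le_left
  have hKJ₀' : ¬ K ≤ J₀ := fun hle => hK (hKJ₀.eq_bot_of_le hle)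
  have hsup : J₀ ⊔ K = J :=
    (hJ.eq_or_eq le_sup_left (sup_le hJ.le inf_le_right)).resolve_left
      fun h => hKJ₀' (h ▸ le_sup_right)
  -- `K` is a complement of `J₀` in `J`, so it is simple because `J₀ ⋖ J`.
  have hKatom : IsAtom K := by
    rw [← bot_covBy_iff, ← hKJ₀.symm.eq_bot]
    exact inf_covBy_of_covBy_sup_left (hsup ▸ hJ)
  have hg₀ : Function.Injective (g ∘ₗ J₀.subtype) := by
    rw [← ker_eq_bot, ker_comp, ← disjoint_iff_comap_eq_bot]
    exact hg.symm
  obtain ⟨θ, hθ⟩ := exists_range_not_le_range hKJ₀' _ hg₀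
  have hι : Function.Injective (J₀.mkQ ∘ₗ K.subtype) := by
    rw [← ker_eq_bot, ker_comp, ker_mkQ, ← disjoint_iff_comap_eq_bot]
    exact hKJ₀
  -- extend `θ` from `K ↪ M ⧸ J₀` to `M ⧸ J₀`, so that the extension vanishes on `J₀`
  obtain ⟨θ', hθ'⟩ := Module.Injective.out _ hι θ
  refine ⟨θ' ∘ₗ J₀.mkQ, fun x hx => by simp [(Quotient.mk_eq_zero _).2 hx], ?_⟩
  rw [disjoint_def]
  intro z hz hzJ
  obtain ⟨x, hx, k, hk, rfl⟩ := mem_sup.mp (hsup ▸ hzJ : z ∈ J₀ ⊔ K)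
  have hgk : g k = 0 := (mem_inf.mp hk).1
  -- `(g + h) (x + k) = g x + θ k`, and `θ k ∉ g '' J₀` unless `k = 0`
  have hsum : g x + θ ⟨k, hk⟩ = 0 := by
    simpa [(Quotient.mk_eq_zero _).2 hx, hgk, ← hθ' ⟨k, hk⟩] using hz
  have hk0 : (⟨k, hk⟩ : K) = 0 := hKatom.eq_zero_of_apply_mem hθ
    ⟨⟨-x, J₀.neg_mem hx⟩, by simpa [neg_eq_iff_add_eq_zero] using hsum⟩
  rw [hk0, map_zero, add_zero] at hsum
  rw [disjoint_def.mp hg x hsum hx, show k = 0 from congrArg Subtype.val hk0, add_zero]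

theorem Module.Injective.exists_linearEquiv_apply_eq [Finite M] [Module.Injective R M]
    (I : Submodule R M) (φ : I →ₗ[R] M) (hφ : Function.Injective φ) :
    ∃ e : M ≃ₗ[R] M, ∀ x : I, e x = φ x := by
  have : Finite (Submodule R M) := _root_.Finite.of_injective _ SetLike.coe_injective
  suffices ∀ J, I ≤ J → ∃ g : M →ₗ[R] M, (∀ x : I, g x = φ x) ∧ Disjoint (ker g) J by
    obtain ⟨g, hgφ, hg⟩ := this ⊤ le_top
    have hinj : Function.Injective g := by rw [← ker_eq_bot]; exact disjoint_top.mp hg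
    exact ⟨.ofBijective g (Finite.injective_iff_bijective.mp hinj), hgφ⟩
  intro J
  induction J using WellFoundedLT.induction with
  | _ J ih =>
  intro hIJ
  rcases hIJ.eq_or_lt with rfl | hlt
  · obtain ⟨g, hg⟩ := Module.Injective.out I.subtype Subtype.val_injective φ
    refine ⟨g, hg, disjoint_def.mpr fun z hz hzI => ?_⟩
    have hφz : φ ⟨z, hzI⟩ = φ 0 := by rw [← hg, map_zero]; exact hz
    exact congrArg Subtype.val (hφ hφz)
  · obtain ⟨J₀, hIJ₀, hJ₀⟩ := exists_le_covBy_of_lt hlt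
    obtain ⟨g, hgφ, hg⟩ := ih J₀ hJ₀.lt hIJ₀
    obtain ⟨h, hhJ₀, hgh⟩ := exists_disjoint_ker_add_of_covBy hJ₀ hg
    exact ⟨g + h, fun x => by simp [hgφ, mem_ker.mp (hhJ₀ (hIJ₀ x.2))], hgh⟩

end FiniteInjective

section SelfInjective

open LinearMap Submodule

variable {R : Type*} [Ring R] [Module.Injective R R]

theorem exists_unit_mul_eq_of_injective [Finite R] (I : Submodule R R) (φ : I →ₗ[R] R)
    (hφ : Function.Injective φ) : ∃ u : Rˣ, ∀ x : I, φ x = x * u := by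
  obtain ⟨e, he⟩ := Module.Injective.exists_linearEquiv_apply_eq I φ hφ
  have mul_one_apply : ∀ (e : R ≃ₗ[R] R) r, e r = r * e 1 := fun e r => by
    rw [← smul_eq_mul, ← map_smul, smul_eq_mul, mul_one]
  refine ⟨⟨e 1, e.symm 1, ?_, ?_⟩, fun x => by rw [← he, mul_one_apply]⟩
  · rw [← mul_one_apply e.symm, e.symm_apply_apply]
  · rw [← mul_one_apply e, e.apply_symm_apply]

variable {N : Type*} [AddCommGroup N] [Module R N]

theorem exists_unit_mul_eq_of_ker_eq [Finite R] {p q : N →ₗ[R] R} (h : ker p = ker q) :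
    ∃ u : Rˣ, ∀ x, q x = p x * u := by
  let φ := (ker p).liftQ q h.le ∘ₗ p.quotKerEquivRange.symm.toLinearMap
  have hφ : Function.Injective φ :=
    (ker_eq_bot.mp (ker_liftQ_eq_bot _ _ h.le h.ge)).comp p.quotKerEquivRange.symm.injective
  obtain ⟨u, hu⟩ := exists_unit_mul_eq_of_injective _ φ hφ
  refine ⟨u, fun x => ?_⟩
  rw [← hu ⟨p x, mem_range_self p x⟩]
  simp [φ, quotKerEquivRange_symm_apply_image]

theorem exists_comp_eq_of_ker_le {P : Type*} [AddCommGroup P] [Module R P] {p : N →ₗ[R] P}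
    {q : N →ₗ[R] R} (h : ker p ≤ ker q) : ∃ G : P →ₗ[R] R, G ∘ₗ p = q := by
  obtain ⟨G, hG⟩ := Module.Injective.extension_property R R _ _ ((ker p).liftQ p le_rfl)
    (by rw [← ker_eq_bot]; exact ker_liftQ_eq_bot _ _ _ le_rfl) ((ker p).liftQ q h)
  refine ⟨G, ?_⟩
  ext x
  simpa using LinearMap.congr_fun hG (Submodule.Quotient.mk x)

end SelfInjective

section RTWeight

variable {R : Type*} [Ring R] {n : ℕ}

theorem wtRT_le_iff {x : Fin n → R} {k : ℕ} : wtRT x ≤ k ↔ ∀ i : Fin n, k ≤ i → x i = 0 := by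
  simp only [wtRT, Finset.sup_le_iff, Finset.mem_filter, Finset.mem_univ, true_and]
  refine ⟨fun h i hki => ?_, fun h i hi => ?_⟩
  · by_contra hxi
    have := h i hxi
    omega
  · by_contra hik
    exact hi (h i (by omega))

theorem le_wtRT {x : Fin n → R} {i : Fin n} (h : x i ≠ 0) : (i : ℕ) + 1 ≤ wtRT x :=
  Finset.le_sup (f := fun i : Fin n => (i : ℕ) + 1) (by simpa using h)

theorem wtRT_eq_zero_iff {x : Fin n → R} : wtRT x = 0 ↔ x = 0 := by
  rw [← Nat.le_zero, wtRT_le_iff, funext_iff]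
  simp

theorem wtRT_le_iff_apply_eq_zero {x : Fin n → R} {k : Fin n} (hx : wtRT x ≤ k + 1) :
    wtRT x ≤ k ↔ x k = 0 := by
  rw [wtRT_le_iff] at hx ⊢
  refine ⟨fun h => h k le_rfl, fun hk i hki => ?_⟩
  rcases hki.eq_or_lt with hki | hki
  · rwa [← Fin.ext hki]
  · exact hx i hki

theorem wtRT_vecMul_of_lowerTriangular {M : Matrix (Fin n) (Fin n) R}
    (hM : ∀ i j, i < j → M i j = 0) (hdiag : ∀ i, IsUnit (M i i)) (v : Fin n → R) :
    wtRT (v ᵥ* M) = wtRT v := by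
  have hvecMul : ∀ j, (v ᵥ* M) j = ∑ i, v i * M i j := fun j => rfl
  refine le_antisymm (wtRT_le_iff.mpr fun j hj => ?_) (wtRT_le_iff.mpr fun i hi => ?_)
  · refine (hvecMul j).trans (Finset.sum_eq_zero fun i _ => ?_)
    by_cases hvi : v i = 0
    · rw [hvi, zero_mul]
    · have := le_wtRT hvi
      rw [hM i j (Fin.lt_def.mpr (by omega)), mul_zero]
  · by_contra hvi
    -- the last nonzero coordinate `j` of `v` survives: `(v ᵥ* M) j = v j * M j j`
    obtain ⟨j, hj, hjmax⟩ := (Finset.univ.filter fun l => v l ≠ 0).exists_max_image id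
      ⟨i, by simpa using hvi⟩
    simp only [Finset.mem_filter, Finset.mem_univ, true_and, id] at hj hjmax
    have hvMj : (v ᵥ* M) j = v j * M j j := by
      refine (hvecMul j).trans (Finset.sum_eq_single j (fun l _ hlj => ?_) (by simp))
      rcases lt_or_gt_of_ne hlj with hlj | hlj
      · rw [hM l j hlj, mul_zero]
      · rw [not_imp_comm.mp (hjmax l) hlj.not_ge, zero_mul]
    have := le_wtRT (x := v ᵥ* M) (i := j) (by
      rw [hvMj]; exact fun h0 => hj ((hdiag j).mul_left_eq_zero.mp h0))
    have := hjmax i hvi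
    omega

end RTWeight

theorem Matrix.isUnit_of_vecMul_bijective {R m : Type*} [Ring R] [Fintype m] [DecidableEq m]
    {A : Matrix m m R} (h : Function.Bijective A.vecMul) : IsUnit A := by
  obtain ⟨B, hBA⟩ := vecMul_surjective_iff_exists_left_inverse.mp h.2
  have hAB : A * B = 1 := by
    funext i
    apply h.1
    dsimp only
    rw [← mul_apply_eq_vecMul, ← mul_apply_eq_vecMul, Matrix.mul_assoc, hBA, Matrix.mul_one,
      Matrix.one_mul]
  exact ⟨⟨A, B, hAB, hBA⟩, rfl⟩

section Columns

open LinearMap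

variable {R : Type*} [Ring R] {n : ℕ}

def projAbove (k : Fin n) : (Fin n → R) →ₗ[R] Fin n → R :=
  LinearMap.pi fun i => if k < i then proj i else 0

theorem projAbove_apply (k : Fin n) (x : Fin n → R) (i : Fin n) :
    projAbove k x i = if k < i then x i else 0 := by
  by_cases h : k < i <;> simp [projAbove, h]

theorem projAbove_eq_zero_iff {k : Fin n} {x : Fin n → R} :
    projAbove k x = 0 ↔ wtRT x ≤ k + 1 := by
  simp only [funext_iff, projAbove_apply, wtRT_le_iff, Pi.zero_apply, ite_eq_right_iff,
    Fin.lt_def]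
  exact forall_congr' fun i => by constructor <;> intro h hi <;> exact h (by omega)

theorem projAbove_dotProduct (k : Fin n) (x c : Fin n → R) :
    projAbove k x ⬝ᵥ c = x ⬝ᵥ projAbove k c := by
  refine Finset.sum_congr rfl fun i _ => ?_
  by_cases h : k < i <;> simp [projAbove_apply, h]

variable [Finite R] [Module.Injective R R] (C : Submodule R (Fin n → R))
  {f : C →ₗ[R] Fin n → R} (hf : ∀ x : C, wtRT (f x) = wtRT (x : Fin n → R))
include hf

theorem exists_unit_apply_eq_mul (k : Fin n) :
    ∃ u : Rˣ, ∀ x : C, wtRT (x : Fin n → R) ≤ k + 1 → f x k = (x : Fin n → R) k * u := by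
  let S := ker (projAbove k ∘ₗ C.subtype)
  have hS : ∀ x : S, wtRT ((x : C) : Fin n → R) ≤ k + 1 := fun x =>
    projAbove_eq_zero_iff.mp x.2
  let p : S →ₗ[R] R := proj k ∘ₗ C.subtype ∘ₗ S.subtype
  let q : S →ₗ[R] R := proj k ∘ₗ f ∘ₗ S.subtype
  have hpq : ker p = ker q := by
    ext x
    have hfx : wtRT (f x) ≤ k + 1 := (hf x).trans_le (hS x)
    simp only [p, q, mem_ker, LinearMap.comp_apply, proj_apply, Submodule.subtype_apply]
    rw [← wtRT_le_iff_apply_eq_zero (hS x), ← wtRT_le_iff_apply_eq_zero hfx, hf]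
  obtain ⟨u, hu⟩ := exists_unit_mul_eq_of_ker_eq (N := S) hpq
  exact ⟨u, fun x hx => hu ⟨x, projAbove_eq_zero_iff.mpr hx⟩⟩

theorem exists_apply_eq_dotProduct (k : Fin n) :
    ∃ m : Fin n → R, IsUnit (m k) ∧ (∀ i < k, m i = 0) ∧
      ∀ x : C, f x k = (x : Fin n → R) ⬝ᵥ m := by
  obtain ⟨u, hu⟩ := exists_unit_apply_eq_mul C hf k
  -- `f x k - x k * u` depends only on the coordinates of `x` above `k`
  obtain ⟨G, hG⟩ := exists_comp_eq_of_ker_le (p := projAbove k ∘ₗ C.subtype)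
    (q := proj k ∘ₗ f - (proj k).smulRight (u : R) ∘ₗ C.subtype) <| fun x hx => by
    simp [hu x (projAbove_eq_zero_iff.mp hx)]
  let c : Fin n → R := fun i => G fun j => if i = j then 1 else 0
  have hGc : ∀ v, G v = v ⬝ᵥ c := fun v => G.pi_apply_eq_sum_univ v
  refine ⟨projAbove k c + Pi.single k (u : R), by simp [projAbove_apply], fun i hi => ?_,
    fun x => ?_⟩
  · simp [projAbove_apply, hi.not_gt, hi.ne]
  · have hx := LinearMap.congr_fun hG x
    simp only [LinearMap.comp_apply, LinearMap.sub_apply, smulRight_apply, proj_apply,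
      Submodule.subtype_apply, smul_eq_mul] at hx
    rw [dotProduct_add, dotProduct_single, ← projAbove_dotProduct, ← hGc, hx, sub_add_cancel]

end Columns

/-- **Extension theorem for the Rosenbloom–Tsfasman weight.**  Over a finite Frobenius
ring `R`, every left `R`-linear `wt_RT`-preserving map `f : C → R^n` on a code
`C ⊆ R^n` is a global `LT(n,R)`-map; in particular it extends to a `wt_RT`-preserving
`R`-linear automorphism of `R^n`. -/
theorem RT_extension {R : Type*} [Ring R] [Fintype R] (hR : IsFrobeniusRing R)
    {n : ℕ} (C : Submodule R (Fin n → R)) (f : C →ₗ[R] (Fin n → R))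
    (hf : ∀ x : C, wtRT (f x) = wtRT (x : Fin n → R)) :
    (∃ M : (Matrix (Fin n) (Fin n) R)ˣ,
      (∀ i j : Fin n, i < j → M.val i j = 0) ∧
      ∀ x : C, f x = (x : Fin n → R) ᵥ* M.val) ∧
    (∃ g : (Fin n → R) ≃ₗ[R] (Fin n → R),
      (∀ v : Fin n → R, wtRT (g v) = wtRT v) ∧
      ∀ x : C, g (x : Fin n → R) = f x) := by
  obtain ⟨χ, hχ⟩ := hR
  have := hχ.moduleInjective
  choose m hunit hlower hm using exists_apply_eq_dotProduct C hf
  let M : Matrix (Fin n) (Fin n) R := Matrix.of fun i k => m k i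
  have hM : ∀ i j, i < j → M i j = 0 := fun i j hij => hlower j i hij
  have hwt : ∀ v, wtRT (v ᵥ* M) = wtRT v := wtRT_vecMul_of_lowerTriangular hM hunit
  have hinj : Function.Injective M.vecMulLinear := (injective_iff_map_eq_zero _).mpr
    fun v hv => wtRT_eq_zero_iff.mp ((hwt v).symm.trans (wtRT_eq_zero_iff.mpr hv))
  have hbij : Function.Bijective M.vecMul := Finite.injective_iff_bijective.mp hinj
  have hfM : ∀ x : C, f x = (x : Fin n → R) ᵥ* M := fun x => funext fun k => hm k x
  exact ⟨⟨(isUnit_of_vecMul_bijective hbij).unit, hM, hfM⟩,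
    ⟨.ofBijective M.vecMulLinear hbij, hwt, fun x => (hfM x).symm⟩⟩
end
end

section
/- Let R be a finite Frobenius ring with generating character χ, and define the normalized homogeneous weight ω : R → ℂ by ω(r) = 1 − (1/|R^×|) · ∑_{u∈R^×} χ(ru), extended additively to R^n by ω(x_1,…,x_n) = ∑_{i=1}^n ω(x_i). If f : C → C' is a left R-linear isomorphism between codes C, C' ⊆ R^n with ω(f(x)) = ω(x) for all x ∈ C, then f is a global Mon(n,R)-map: there exists a monomial matrix M ∈ Mon(n,R) such that f(x) = x·M for all x ∈ C. -/
open Matrix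
open scoped Classical

noncomputable section

/-- Honold's formula for the normalized homogeneous weight on a finite Frobenius ring
with generating character `χ`: `ω(r) = 1 - (1/|R^×|) ∑_{u ∈ R^×} χ(r u)`. -/
def homWeight {R : Type*} [Ring R] [Fintype R] (χ : AddChar R ℂ) (r : R) : ℂ :=
  1 - (1 / (Fintype.card Rˣ : ℂ)) * ∑ u : Rˣ, χ (r * (u : R))

/-- `M ∈ Mon(n,R)`: `M` is a monomial matrix, i.e. has exactly one nonzero entry in each
row and each column, and these nonzero entries are units of `R`. -/
def IsMonomial {R : Type*} [Ring R] {n : ℕ} (M : Matrix (Fin n) (Fin n) R) : Prop :=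
  ∃ (σ : Equiv.Perm (Fin n)) (d : Fin n → Rˣ),
    ∀ i j, M i j = if j = σ i then (d i : R) else 0

/- Each coordinate of `f`, and of the inclusion `C → R^n`, is a linear functional on the
finite module `C`.  Weight preservation says that the two families of additive characters
`x ↦ χ (φ x * u)` (`φ` a coordinate, `u` a unit) have the same sum, so by orthogonality every
character occurs equally often in both.  Hence each coordinate `φ` of `f` matches, as a
character, some coordinate `ψ` of the inclusion twisted by a unit `v`; since `χ` generates, this
is an equality `φ = ψ * v` of functionals.  The unit sums of `φ` and `ψ` then agree, so they
cancel, and induction on the remaining coordinates produces the permutation and the units. -/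

open scoped Finset

section CharacterSums

variable {G : Type*} [AddCommGroup G]

lemma AddChar.sum_sum_apply_mul_apply_neg [Fintype G] {ι : Type*} (s : Finset ι)
    (Ψ : ι → AddChar G ℂ) (ψ : AddChar G ℂ) :
    ∑ x : G, (∑ a ∈ s, Ψ a x) * ψ (-x) = #{a ∈ s | Ψ a = ψ} * Fintype.card G := by
  calc ∑ x : G, (∑ a ∈ s, Ψ a x) * ψ (-x)
      = ∑ a ∈ s, ∑ x : G, (Ψ a - ψ) x := by
        simp only [Finset.sum_mul, AddChar.sub_apply]
        exact Finset.sum_comm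
    _ = ∑ a ∈ s, if Ψ a = ψ then (Fintype.card G : ℂ) else 0 := by
        refine Finset.sum_congr rfl fun a _ => ?_
        rw [AddChar.sum_eq_ite]
        exact if_congr sub_eq_zero rfl rfl
    _ = #{a ∈ s | Ψ a = ψ} * Fintype.card G := by
        rw [← Finset.sum_filter, Finset.sum_const, nsmul_eq_mul]

lemma AddChar.card_filter_eq_of_sum_eq [Finite G] {ι κ : Type*} {s : Finset ι} {t : Finset κ}
    {Ψ : ι → AddChar G ℂ} {Φ : κ → AddChar G ℂ}
    (h : ∀ x, ∑ a ∈ s, Ψ a x = ∑ b ∈ t, Φ b x) (ψ : AddChar G ℂ) :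
    #{a ∈ s | Ψ a = ψ} = #{b ∈ t | Φ b = ψ} := by
  cases nonempty_fintype G
  have hG : (Fintype.card G : ℂ) ≠ 0 := Nat.cast_ne_zero.2 Fintype.card_ne_zero
  have := AddChar.sum_sum_apply_mul_apply_neg s Ψ ψ
  simp only [h, AddChar.sum_sum_apply_mul_apply_neg] at this
  exact_mod_cast (mul_right_cancel₀ hG this).symm

lemma AddChar.exists_eq_of_sum_eq [Finite G] {ι κ : Type*} {s : Finset ι} {t : Finset κ}
    {Ψ : ι → AddChar G ℂ} {Φ : κ → AddChar G ℂ}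
    (h : ∀ x, ∑ a ∈ s, Ψ a x = ∑ b ∈ t, Φ b x) {a : ι} (ha : a ∈ s) :
    ∃ b ∈ t, Φ b = Ψ a := by
  have hcard := AddChar.card_filter_eq_of_sum_eq h (Ψ a)
  have : #{b ∈ t | Φ b = Ψ a} ≠ 0 :=
    hcard ▸ Finset.card_ne_zero_of_mem (Finset.mem_filter.2 ⟨ha, rfl⟩)
  simpa [Finset.filter_eq_empty_iff] using this

end CharacterSums

section GeneratingCharacter

variable {R : Type*} [Ring R] [Fintype R] {χ : AddChar R ℂ}

lemma IsGeneratingChar.eq_of_forall_mul (hχ : IsGeneratingChar χ) {a b : R}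
    (h : ∀ r, χ (r * a) = χ (r * b)) : a = b := by
  obtain ⟨c, -, hc⟩ := hχ (χ.compAddMonoidHom (AddMonoidHom.mulRight a))
  exact (hc a fun _ => rfl).trans (hc b h).symm

lemma IsGeneratingChar.linearMap_ext (hχ : IsGeneratingChar χ) {M : Type*} [AddCommGroup M]
    [Module R M] {φ ψ : M →ₗ[R] R} (h : ∀ x, χ (φ x) = χ (ψ x)) : φ = ψ := by
  ext x
  refine hχ.eq_of_forall_mul fun r => ?_
  simpa only [map_smul, smul_eq_mul] using h (r • x)

end GeneratingCharacter

section UnitCharSum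

variable {R : Type*} [Ring R] [Fintype R]

def unitCharSum (χ : AddChar R ℂ) (r : R) : ℂ :=
  ∑ u : Rˣ, χ (r * u)

lemma unitCharSum_mul_unit (χ : AddChar R ℂ) (r : R) (v : Rˣ) :
    unitCharSum χ (r * v) = unitCharSum χ r := by
  unfold unitCharSum
  simp_rw [mul_assoc, ← Units.val_mul]
  exact Fintype.sum_equiv (Equiv.mulLeft v) _ _ fun _ => rfl

lemma sum_homWeight_eq_iff (χ : AddChar R ℂ) {ι : Type*} [Fintype ι] (a b : ι → R) :
    ∑ i, homWeight χ (a i) = ∑ i, homWeight χ (b i) ↔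
      ∑ i, unitCharSum χ (a i) = ∑ i, unitCharSum χ (b i) := by
  have hR : (1 / (Fintype.card Rˣ : ℂ)) ≠ 0 := by simp
  simp only [homWeight, Finset.sum_sub_distrib, ← Finset.mul_sum, sub_right_inj]
  exact (mul_right_injective₀ hR).eq_iff

end UnitCharSum

section Matching

variable {R : Type*} [Ring R] [Fintype R] {χ : AddChar R ℂ}
  {M : Type*} [AddCommGroup M] [Module R M] [Finite M] {ι : Type*} {φ ψ : ι → M →ₗ[R] R}

lemma exists_eq_smulRight_of_sum_unitCharSum_eq (hχ : IsGeneratingChar χ)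
    {s t : Finset ι}
    (h : ∀ x, ∑ i ∈ s, unitCharSum χ (φ i x) = ∑ j ∈ t, unitCharSum χ (ψ j x))
    {i : ι} (hi : i ∈ s) : ∃ j ∈ t, ∃ v : Rˣ, φ i = (ψ j).smulRight (v : R) := by
  let char (θ : ι → M →ₗ[R] R) (p : ι × Rˣ) : AddChar M ℂ :=
    χ.compAddMonoidHom ((θ p.1).smulRight (p.2 : R)).toAddMonoidHom
  have hchar : ∀ x,
      ∑ p ∈ s ×ˢ Finset.univ, char φ p x = ∑ p ∈ t ×ˢ Finset.univ, char ψ p x := by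
    simpa [Finset.sum_product, unitCharSum, char] using h
  obtain ⟨⟨j, v⟩, hj, hjv⟩ :=
    AddChar.exists_eq_of_sum_eq hchar (a := (i, 1))
      (Finset.mem_product.2 ⟨hi, Finset.mem_univ _⟩)
  refine ⟨j, (Finset.mem_product.1 hj).1, v, hχ.linearMap_ext fun x => ?_⟩
  simpa [char] using (DFunLike.congr_fun hjv x).symm

theorem exists_injOn_eq_smulRight_of_sum_unitCharSum_eq (hχ : IsGeneratingChar χ)
    (s t : Finset ι)
    (h : ∀ x, ∑ i ∈ s, unitCharSum χ (φ i x) = ∑ j ∈ t, unitCharSum χ (ψ j x)) :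
    ∃ (g : ι → ι) (d : ι → Rˣ), Set.MapsTo g s t ∧ Set.InjOn g s ∧
      ∀ i ∈ s, φ i = (ψ (g i)).smulRight (d i : R) := by
  induction s using Finset.induction_on generalizing t with
  | empty => exact ⟨id, 1, by simp [Set.MapsTo], by simp, by simp⟩
  | insert i s hi ih =>
    obtain ⟨j, hj, v, hφ⟩ :=
      exists_eq_smulRight_of_sum_unitCharSum_eq hχ h (Finset.mem_insert_self i s)
    have hij : ∀ x, unitCharSum χ (φ i x) = unitCharSum χ (ψ j x) := fun x => by
      rw [hφ, LinearMap.smulRight_apply, smul_eq_mul, unitCharSum_mul_unit]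
    obtain ⟨g, d, hmaps, hinj, hgd⟩ := ih (t.erase j) fun x => by
      have hx := h x
      rw [Finset.sum_insert hi, ← Finset.add_sum_erase _ _ hj, hij x] at hx
      exact add_left_cancel hx
    have hg : Set.EqOn (Function.update g i j) g s := fun k hk =>
      Function.update_of_ne (ne_of_mem_of_not_mem hk hi) _ _
    have hd : ∀ k ∈ s, Function.update d i v k = d k := fun k hk =>
      Function.update_of_ne (ne_of_mem_of_not_mem hk hi) _ _
    refine ⟨Function.update g i j, Function.update d i v, ?_, ?_, ?_⟩
    · intro k hk
      rcases Finset.mem_insert.1 hk with rfl | hk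
      · simpa using hj
      · rw [hg hk]
        exact Finset.mem_of_mem_erase (hmaps hk)
    · rw [Finset.coe_insert, Set.injOn_insert (by simpa using hi), hg.image_eq,
        Function.update_self]
      refine ⟨hinj.congr hg.symm, ?_⟩
      rintro ⟨k, hk, hgk⟩
      exact Finset.ne_of_mem_erase (hmaps hk) hgk
    · intro k hk
      rcases Finset.mem_insert.1 hk with rfl | hk
      · simpa using hφ
      · rw [hg hk, hd k hk]
        exact hgd k hk

end Matching

lemma vecMul_of_ite_perm {R : Type*} [Ring R] {ι : Type*} [Fintype ι] [DecidableEq ι]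
    (σ : Equiv.Perm ι) (d : ι → R) (x : ι → R) :
    x ᵥ* Matrix.of (fun i j => if j = σ i then d i else 0) =
      fun j => x (σ.symm j) * d (σ.symm j) := by
  funext j
  rw [vecMul, dotProduct, Finset.sum_eq_single (σ.symm j)]
  · simp
  · intro i _ hi
    rw [Matrix.of_apply, if_neg (fun h => hi (σ.eq_symm_apply.2 h.symm)), mul_zero]
  · simp

/-- **Extension theorem for the homogeneous weight.**  Over a finite Frobenius ring `R`
with generating character `χ`, every left `R`-linear isomorphism `f : C → C'` between
codes in `R^n` preserving the additively extended normalized homogeneous weight is a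
global `Mon(n,R)`-map. -/
theorem homogeneous_extension {R : Type*} [Ring R] [Fintype R]
    (χ : AddChar R ℂ) (hχ : IsGeneratingChar χ)
    {n : ℕ} (C C' : Submodule R (Fin n → R)) (f : C ≃ₗ[R] C')
    (hf : ∀ x : C, ∑ i : Fin n, homWeight χ ((f x : Fin n → R) i) =
      ∑ i : Fin n, homWeight χ ((x : Fin n → R) i)) :
    ∃ M : Matrix (Fin n) (Fin n) R,
      IsMonomial M ∧ ∀ x : C, (f x : Fin n → R) = (x : Fin n → R) ᵥ* M := by
  obtain ⟨g, d, -, hinj, hgd⟩ := exists_injOn_eq_smulRight_of_sum_unitCharSum_eq hχ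
    (φ := fun i => LinearMap.proj i ∘ₗ C'.subtype ∘ₗ f.toLinearMap)
    (ψ := fun i => LinearMap.proj i ∘ₗ C.subtype) Finset.univ Finset.univ
    (by simpa using fun x => (sum_homWeight_eq_iff χ _ _).1 (hf x))
  let σ := Equiv.ofBijective g (Finite.injective_iff_bijective.1 (by simpa using hinj))
  refine ⟨Matrix.of fun i j => if j = σ.symm i then d (σ.symm i) else 0,
    ⟨σ.symm, d ∘ σ.symm, fun _ _ => rfl⟩, fun x => ?_⟩
  rw [vecMul_of_ite_perm]
  funext i
  simpa [σ] using LinearMap.congr_fun (hgd i (Finset.mem_univ i)) x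

end
end

section
/- Let R be a finite Frobenius ring (i.e., a finite ring admitting a generating character) with 1 ≠ 0, and let P = ([n],≤) be a poset that is not hierarchical. Then there exist codes C, C' ⊆ R^n and a left R-linear bijection f : C → C' with wt_P(f(x)) = wt_P(x) for all x ∈ C, such that f cannot be extended to a wt_P-preserving R-linear bijection of R^n; i.e., there is no R-linear bijection g : R^n → R^n with wt_P(g(x)) = wt_P(x) for all x ∈ R^n and g(x) = f(x) for all x ∈ C. Consequently, if the MacWilliams extension theorem holds for all wt_P-preserving isomorphisms between codes in R^n, then P is hierarchical. -/
open Matrix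
open scoped Classical

noncomputable section

/-- The poset weight of `x`, with respect to the order relation `le` on the coordinate
set: the cardinality of the smallest ideal containing the support of `x`. -/
def posetWeight {ι : Type*} [Fintype ι] {R : Type*} [Zero R]
    (le : ι → ι → Prop) (x : ι → R) : ℕ :=
  Set.ncard {k : ι | ∃ j : ι, x j ≠ 0 ∧ le k j}

/-- A poset on `Fin n` is hierarchical iff there is a level function `lvl` such that
`l < m` in the poset exactly when `lvl l < lvl m`. -/
def IsHierarchical {n : ℕ} (le : Fin n → Fin n → Prop) : Prop :=
  ∃ lvl : Fin n → ℕ, ∀ l m : Fin n, (le l m ∧ l ≠ m) ↔ lvl l < lvl m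

section Aux

variable {n : ℕ}

/-- The (closed) down-set of an element. -/
def dwn (le : Fin n → Fin n → Prop) (c : Fin n) : Finset (Fin n) :=
  Finset.univ.filter fun k => le k c

/-- The lower closure of a finite set. -/
def dcl (le : Fin n → Fin n → Prop) (S : Finset (Fin n)) : Finset (Fin n) :=
  Finset.univ.filter fun k => ∃ j ∈ S, le k j

lemma mem_dwn {le : Fin n → Fin n → Prop} {c k : Fin n} : k ∈ dwn le c ↔ le k c := by
  simp [dwn]

lemma mem_dcl {le : Fin n → Fin n → Prop} {S : Finset (Fin n)} {k : Fin n} :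
    k ∈ dcl le S ↔ ∃ j ∈ S, le k j := by simp [dcl]

lemma dcl_singleton {le : Fin n → Fin n → Prop} {c : Fin n} : dcl le {c} = dwn le c := by
  ext k; simp [dcl, dwn]

lemma dcl_mono {le : Fin n → Fin n → Prop} {S T : Finset (Fin n)} (h : S ⊆ T) :
    dcl le S ⊆ dcl le T := by
  intro k hk
  obtain ⟨j, hj, hkj⟩ := mem_dcl.mp hk
  exact mem_dcl.mpr ⟨j, h hj, hkj⟩

/-- Down-closed finsets ("ideals"). -/
def isIdl (le : Fin n → Fin n → Prop) (I : Finset (Fin n)) : Prop :=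
  ∀ k j, j ∈ I → le k j → k ∈ I

lemma dcl_isIdl (le : Fin n → Fin n → Prop)
    (htrans : ∀ a b c, le a b → le b c → le a c) (S : Finset (Fin n)) :
    isIdl le (dcl le S) := by
  intro k j hj hkj
  obtain ⟨i, hi, hji⟩ := mem_dcl.mp hj
  exact mem_dcl.mpr ⟨i, hi, htrans _ _ _ hkj hji⟩

lemma dwn_isIdl (le : Fin n → Fin n → Prop)
    (htrans : ∀ a b c, le a b → le b c → le a c) (c : Fin n) :
    isIdl le (dwn le c) := by
  intro k j hj hkj
  exact mem_dwn.mpr (htrans _ _ _ hkj (mem_dwn.mp hj))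

lemma dwn_card_lt (le : Fin n → Fin n → Prop)
    (hrefl : ∀ a, le a a) (hantisymm : ∀ a b, le a b → le b a → a = b)
    (htrans : ∀ a b c, le a b → le b c → le a c)
    {a b : Fin n} (hab : le a b) (hne : a ≠ b) :
    (dwn le a).card < (dwn le b).card := by
  apply Finset.card_lt_card
  refine (Finset.ssubset_iff_of_subset fun k hk =>
    mem_dwn.mpr (htrans _ _ _ (mem_dwn.mp hk) hab)).mpr ⟨b, mem_dwn.mpr (hrefl b), fun hb => ?_⟩
  exact hne (hantisymm a b hab (mem_dwn.mp hb))

lemma exists_min (le : Fin n → Fin n → Prop)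
    (hrefl : ∀ a, le a a) (hantisymm : ∀ a b, le a b → le b a → a = b)
    (htrans : ∀ a b c, le a b → le b c → le a c)
    (T : Finset (Fin n)) (hT : T.Nonempty) :
    ∃ p ∈ T, ∀ q ∈ T, le q p → q = p := by
  obtain ⟨p, hp, hmin⟩ := T.exists_min_image (fun q => (dwn le q).card) hT
  refine ⟨p, hp, fun q hq hqp => ?_⟩
  by_contra hne
  exact absurd (hmin q hq) (not_le.mpr (dwn_card_lt le hrefl hantisymm htrans hqp hne))

lemma exists_max_above (le : Fin n → Fin n → Prop)
    (hrefl : ∀ a, le a a) (hantisymm : ∀ a b, le a b → le b a → a = b)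
    (htrans : ∀ a b c, le a b → le b c → le a c)
    (K : Finset (Fin n)) {k : Fin n} (hk : k ∈ K) :
    ∃ p ∈ K, le k p ∧ ∀ q ∈ K, le p q → p = q := by
  have hT : k ∈ K.filter (fun q => le k q) := Finset.mem_filter.mpr ⟨hk, hrefl k⟩
  obtain ⟨p, hp, hmax⟩ := (K.filter (fun q => le k q)).exists_max_image
    (fun q => (dwn le q).card) ⟨k, hT⟩
  obtain ⟨hpK, hkp⟩ := Finset.mem_filter.mp hp
  refine ⟨p, hpK, hkp, fun q hq hpq => ?_⟩
  by_contra hne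
  have hqT : q ∈ K.filter (fun q => le k q) :=
    Finset.mem_filter.mpr ⟨hq, htrans _ _ _ hkp hpq⟩
  exact absurd (hmax q hqT) (not_le.mpr (dwn_card_lt le hrefl hantisymm htrans hpq hne))

lemma grow_aux (le : Fin n → Fin n → Prop)
    (hrefl : ∀ a, le a a) (hantisymm : ∀ a b, le a b → le b a → a = b)
    (htrans : ∀ a b c, le a b → le b c → le a c)
    (J : Finset (Fin n)) (hJ : isIdl le J) :
    ∀ d (I : Finset (Fin n)), isIdl le I → I ⊆ J → I.card + d ≤ J.card →
      ∃ K, isIdl le K ∧ I ⊆ K ∧ K ⊆ J ∧ K.card = I.card + d := by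
  intro d
  induction d with
  | zero => exact fun I hI hIJ _ => ⟨I, hI, Finset.Subset.refl I, hIJ, rfl⟩
  | succ d ih =>
    intro I hI hIJ hcard
    have hne : (J \ I).Nonempty := by
      rw [← Finset.card_pos, Finset.card_sdiff_of_subset hIJ]; omega
    obtain ⟨p, hp, hpmin⟩ := exists_min le hrefl hantisymm htrans (J \ I) hne
    have hpJ : p ∈ J := (Finset.mem_sdiff.mp hp).1
    have hpI : p ∉ I := (Finset.mem_sdiff.mp hp).2
    have hins : isIdl le (insert p I) := by
      intro k j hj hkj
      rcases Finset.mem_insert.mp hj with rfl | hjI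
      · by_cases hkI : k ∈ I
        · exact Finset.mem_insert_of_mem hkI
        · have hkJ : k ∈ J := hJ k j hpJ hkj
          have hkp : k = j := hpmin k (Finset.mem_sdiff.mpr ⟨hkJ, hkI⟩) hkj
          exact hkp ▸ Finset.mem_insert_self j I
      · exact Finset.mem_insert_of_mem (hI k j hjI hkj)
    obtain ⟨K, h1, h2, h3, h4⟩ := ih (insert p I) hins
      (Finset.insert_subset hpJ hIJ)
      (by rw [Finset.card_insert_of_notMem hpI]; omega)
    exact ⟨K, h1, fun x hx => h2 (Finset.mem_insert_of_mem hx), h3,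
      by rw [h4, Finset.card_insert_of_notMem hpI]; omega⟩

lemma grow (le : Fin n → Fin n → Prop)
    (hrefl : ∀ a, le a a) (hantisymm : ∀ a b, le a b → le b a → a = b)
    (htrans : ∀ a b c, le a b → le b c → le a c)
    {I J : Finset (Fin n)} (hI : isIdl le I) (hJ : isIdl le J) (hIJ : I ⊆ J)
    {w : ℕ} (h1 : I.card ≤ w) (h2 : w ≤ J.card) :
    ∃ K, isIdl le K ∧ I ⊆ K ∧ K ⊆ J ∧ K.card = w := by
  obtain ⟨K, a1, a2, a3, a4⟩ := grow_aux le hrefl hantisymm htrans J hJ (w - I.card) I hI hIJ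
    (by omega)
  exact ⟨K, a1, a2, a3, by omega⟩

lemma principal (le : Fin n → Fin n → Prop)
    (hrefl : ∀ a, le a a) (hantisymm : ∀ a b, le a b → le b a → a = b)
    (htrans : ∀ a b c, le a b → le b c → le a c)
    (noex : ¬ ∃ (c : Fin n) (S : Finset (Fin n)),
      (∀ p ∈ S, ∀ q ∈ S, le p q → p = q) ∧ 2 ≤ S.card ∧
        (dcl le S).card = (dwn le c).card)
    {K : Finset (Fin n)} (hK : isIdl le K) {c : Fin n}
    (hcard : K.card = (dwn le c).card) :
    ∃ m, K = dwn le m := by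
  classical
  set S := K.filter (fun p => ∀ q ∈ K, le p q → p = q) with hSdef
  have hanti : ∀ p ∈ S, ∀ q ∈ S, le p q → p = q := fun p hp q hq hpq =>
    (Finset.mem_filter.mp hp).2 q (Finset.mem_filter.mp hq).1 hpq
  have hdcl : dcl le S = K := by
    apply Finset.Subset.antisymm
    · intro k hk
      obtain ⟨j, hjS, hkj⟩ := mem_dcl.mp hk
      exact hK k j (Finset.mem_filter.mp hjS).1 hkj
    · intro k hk
      obtain ⟨p, hpK, hkp, hpmax⟩ := exists_max_above le hrefl hantisymm htrans K hk
      exact mem_dcl.mpr ⟨p, Finset.mem_filter.mpr ⟨hpK, hpmax⟩, hkp⟩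
  have hKne : K.Nonempty := by
    rw [← Finset.card_pos, hcard]
    exact Finset.card_pos.mpr ⟨c, mem_dwn.mpr (hrefl c)⟩
  obtain ⟨k, hkK⟩ := hKne
  obtain ⟨p, hpK, hkp, hpmax⟩ := exists_max_above le hrefl hantisymm htrans K hkK
  have hpS : p ∈ S := Finset.mem_filter.mpr ⟨hpK, hpmax⟩
  have hcard1 : S.card ≤ 1 := by
    by_contra h
    exact noex ⟨c, S, hanti, by omega, by rw [hdcl, hcard]⟩
  have hSeq : S = {p} := by
    apply Finset.Subset.antisymm
    · intro q hq
      exact Finset.mem_singleton.mpr (Finset.card_le_one.mp hcard1 q hq p hpS)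
    · exact Finset.singleton_subset_iff.mpr hpS
  exact ⟨p, by rw [← hdcl, hSeq, dcl_singleton]⟩

lemma lemW (le : Fin n → Fin n → Prop)
    (hrefl : ∀ a, le a a) (hantisymm : ∀ a b, le a b → le b a → a = b)
    (htrans : ∀ a b c, le a b → le b c → le a c)
    (noex : ¬ ∃ (c : Fin n) (S : Finset (Fin n)),
      (∀ p ∈ S, ∀ q ∈ S, le p q → p = q) ∧ 2 ≤ S.card ∧
        (dcl le S).card = (dwn le c).card)
    (x y z : Fin n) (hxy : ¬le x y) (hyx : ¬le y x) (hyz : ¬le y z) (hzy : ¬le z y)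
    (hxz : le x z) (hxzne : x ≠ z) :
    (dcl le {x, y}).card < (dwn le z).card := by
  by_contra hge
  push_neg at hge
  have hsub : dwn le x ⊆ dcl le {x, y} := fun k hk =>
    mem_dcl.mpr ⟨x, by simp, mem_dwn.mp hk⟩
  have hxlt : (dwn le x).card < (dwn le z).card :=
    dwn_card_lt le hrefl hantisymm htrans hxz hxzne
  obtain ⟨K, hKidl, hK1, hK2, hK3⟩ := grow le hrefl hantisymm htrans
    (dwn_isIdl le htrans x) (dcl_isIdl le htrans _) hsub (le_of_lt hxlt) hge
  obtain ⟨m, hm⟩ := principal le hrefl hantisymm htrans noex hKidl hK3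
  have hxK : x ∈ K := hK1 (mem_dwn.mpr (hrefl x))
  have hxm : le x m := mem_dwn.mp (hm ▸ hxK)
  have hmK : m ∈ K := by rw [hm]; exact mem_dwn.mpr (hrefl m)
  obtain ⟨j, hj, hmj⟩ := mem_dcl.mp (hK2 hmK)
  rcases Finset.mem_insert.mp hj with rfl | hj'
  · have hmx : m = j := hantisymm m j hmj hxm
    rw [hmx] at hm
    rw [hm] at hK3
    omega
  · rw [Finset.mem_singleton.mp hj'] at hmj
    exact hxy (htrans x m y hxm hmj)

lemma no_violation (le : Fin n → Fin n → Prop)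
    (hrefl : ∀ a, le a a) (hantisymm : ∀ a b, le a b → le b a → a = b)
    (htrans : ∀ a b c, le a b → le b c → le a c)
    (noex : ¬ ∃ (c : Fin n) (S : Finset (Fin n)),
      (∀ p ∈ S, ∀ q ∈ S, le p q → p = q) ∧ 2 ≤ S.card ∧
        (dcl le S).card = (dwn le c).card)
    (x y z : Fin n) (hxy : ¬le x y) (hyx : ¬le y x) (hyz : ¬le y z) (hzy : ¬le z y)
    (hxz : le x z) (hxzne : x ≠ z) : False := by
  have hW := lemW le hrefl hantisymm htrans noex x y z hxy hyx hyz hzy hxz hxzne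
  have hsubI : dcl le {x, y} ⊆ dcl le {y, z} := by
    intro k hk
    obtain ⟨j, hj, hkj⟩ := mem_dcl.mp hk
    rcases Finset.mem_insert.mp hj with rfl | hj'
    · exact mem_dcl.mpr ⟨z, by simp, htrans _ _ _ hkj hxz⟩
    · rw [Finset.mem_singleton.mp hj'] at hkj
      exact mem_dcl.mpr ⟨y, by simp, hkj⟩
  have hzsub : dwn le z ⊆ dcl le {y, z} := fun k hk =>
    mem_dcl.mpr ⟨z, by simp, mem_dwn.mp hk⟩
  by_cases hcase : (dcl le {y, z}).card = (dwn le z).card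
  · obtain ⟨m, hm⟩ := principal le hrefl hantisymm htrans noex (dcl_isIdl le htrans _) hcase
    have hym : le y m := by
      have : y ∈ dcl le {y, z} := mem_dcl.mpr ⟨y, by simp, hrefl y⟩
      rw [hm] at this; exact mem_dwn.mp this
    have hzm : le z m := by
      have : z ∈ dcl le {y, z} := mem_dcl.mpr ⟨z, by simp, hrefl z⟩
      rw [hm] at this; exact mem_dwn.mp this
    have hmI : m ∈ dcl le {y, z} := by rw [hm]; exact mem_dwn.mpr (hrefl m)
    obtain ⟨j, hj, hmj⟩ := mem_dcl.mp hmI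
    rcases Finset.mem_insert.mp hj with rfl | hj'
    · exact hzy (hantisymm m j hmj hym ▸ hzm)
    · rw [Finset.mem_singleton.mp hj'] at hmj
      exact hyz (hantisymm m z hmj hzm ▸ hym)
  · have hwlt : (dwn le z).card < (dcl le {y, z}).card :=
      lt_of_le_of_ne (Finset.card_le_card hzsub) (fun h => hcase h.symm)
    obtain ⟨K, hKidl, hK1, hK2, hK3⟩ := grow le hrefl hantisymm htrans
      (dcl_isIdl le htrans ({x, y} : Finset (Fin n))) (dcl_isIdl le htrans _) hsubI
      (le_of_lt hW) (le_of_lt hwlt)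
    obtain ⟨e, he⟩ := principal le hrefl hantisymm htrans noex hKidl hK3
    have hyK : y ∈ K := hK1 (mem_dcl.mpr ⟨y, by simp, hrefl y⟩)
    have hye : le y e := mem_dwn.mp (he ▸ hyK)
    have hyne : y ≠ e := by
      rintro rfl
      have hxK : x ∈ K := hK1 (mem_dcl.mpr ⟨x, by simp, hrefl x⟩)
      exact hxy (mem_dwn.mp (he ▸ hxK))
    have hcardE : (dwn le e).card = (dwn le z).card := by rw [← he]; exact hK3
    have hez : ¬ le e z := by
      intro h
      have hsub2 : dwn le e ⊆ dwn le z := fun k hk =>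
        mem_dwn.mpr (htrans _ _ _ (mem_dwn.mp hk) h)
      have heq : dwn le e = dwn le z :=
        Finset.eq_of_subset_of_card_le hsub2 (by omega)
      have hz_e : le z e := mem_dwn.mp (heq ▸ mem_dwn.mpr (hrefl z))
      exact hyz (hantisymm e z h hz_e ▸ hye)
    have hze : ¬ le z e := by
      intro h
      have hsub2 : dwn le z ⊆ dwn le e := fun k hk =>
        mem_dwn.mpr (htrans _ _ _ (mem_dwn.mp hk) h)
      have heq : dwn le z = dwn le e :=
        Finset.eq_of_subset_of_card_le hsub2 (by omega)
      have he_z : le e z := mem_dwn.mp (heq ▸ mem_dwn.mpr (hrefl e))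
      exact hyz (hantisymm z e h he_z ▸ hye)
    have hfin := lemW le hrefl hantisymm htrans noex y z e hyz hzy hze hez hye hyne
    omega

lemma exists_violation (le : Fin n → Fin n → Prop)
    (hrefl : ∀ a, le a a) (hantisymm : ∀ a b, le a b → le b a → a = b)
    (htrans : ∀ a b c, le a b → le b c → le a c)
    (hnh : ¬ IsHierarchical le) :
    ∃ x y z : Fin n, ¬le x y ∧ ¬le y x ∧ ¬le y z ∧ ¬le z y ∧ le x z ∧ x ≠ z := by
  by_contra hno
  apply hnh
  have key : ∀ a b : Fin n, le a b → a ≠ b →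
      ((dwn le a).erase a).card < ((dwn le b).erase b).card := by
    intro a b hab hne
    apply Finset.card_lt_card
    refine (Finset.ssubset_iff_of_subset ?_).mpr
      ⟨a, Finset.mem_erase.mpr ⟨hne, mem_dwn.mpr hab⟩, fun ha => ?_⟩
    · intro k hk
      obtain ⟨hkne, hkmem⟩ := Finset.mem_erase.mp hk
      refine Finset.mem_erase.mpr ⟨?_, mem_dwn.mpr (htrans _ _ _ (mem_dwn.mp hkmem) hab)⟩
      rintro rfl
      exact hne (hantisymm a k hab (mem_dwn.mp hkmem))
    · exact (Finset.mem_erase.mp ha).1 rfl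
  refine ⟨fun c => ((dwn le c).erase c).card, fun l m => ⟨fun ⟨hlm, hne⟩ => key l m hlm hne, ?_⟩⟩
  intro hlt
  by_contra hcon
  rcases eq_or_ne l m with rfl | hne
  · exact lt_irrefl _ hlt
  have hlm : ¬ le l m := fun h => hcon ⟨h, hne⟩
  by_cases hml : le m l
  · exact absurd hlt (not_lt.mpr (le_of_lt (key m l hml (Ne.symm hne))))
  · have key2 : ∀ a b : Fin n, ¬le a b → ¬le b a →
        (dwn le a).erase a ⊆ (dwn le b).erase b := by
      intro a b hab hba k hk
      obtain ⟨hkne, hkmem⟩ := Finset.mem_erase.mp hk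
      have hka : le k a := mem_dwn.mp hkmem
      have hkb : le k b := by
        by_contra hkb
        have hbk : ¬ le b k := fun h => hba (htrans b k a h hka)
        exact hno ⟨k, b, a, hkb, hbk, hba, hab, hka, hkne⟩
      refine Finset.mem_erase.mpr ⟨?_, mem_dwn.mpr hkb⟩
      rintro rfl
      exact hba hka
    have heq : (dwn le l).erase l = (dwn le m).erase m :=
      Finset.Subset.antisymm (key2 l m hlm hml) (key2 m l hml hlm)
    have hlt' : ((dwn le l).erase l).card < ((dwn le m).erase m).card := hlt
    rw [heq] at hlt'
    exact lt_irrefl _ hlt'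

lemma exists_config (le : Fin n → Fin n → Prop)
    (hrefl : ∀ a, le a a) (hantisymm : ∀ a b, le a b → le b a → a = b)
    (htrans : ∀ a b c, le a b → le b c → le a c)
    (hnh : ¬ IsHierarchical le) :
    ∃ (c s₀ : Fin n) (S : Finset (Fin n)), s₀ ∈ S ∧
      (dcl le S).card = (dwn le c).card ∧
      (dwn le s₀).card < (dwn le c).card ∧
      (dcl le (S.erase s₀)).card < (dwn le c).card := by
  rcases Classical.em (∃ (c : Fin n) (S : Finset (Fin n)),
      (∀ p ∈ S, ∀ q ∈ S, le p q → p = q) ∧ 2 ≤ S.card ∧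
        (dcl le S).card = (dwn le c).card) with ⟨c, S, hanti, hc2, hceq⟩ | noex
  · obtain ⟨s₀, hs₀⟩ := Finset.card_pos.mp (lt_of_lt_of_le Nat.zero_lt_two hc2)
    obtain ⟨t, ht, htne⟩ := Finset.exists_mem_ne (lt_of_lt_of_le Nat.one_lt_two hc2) s₀
    refine ⟨c, s₀, S, hs₀, hceq, ?_, ?_⟩
    · rw [← hceq]
      apply Finset.card_lt_card
      refine (Finset.ssubset_iff_of_subset fun k hk =>
        mem_dcl.mpr ⟨s₀, hs₀, mem_dwn.mp hk⟩).mpr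
        ⟨t, mem_dcl.mpr ⟨t, ht, hrefl t⟩, fun hmem => htne (hanti t ht s₀ hs₀ (mem_dwn.mp hmem))⟩
    · rw [← hceq]
      apply Finset.card_lt_card
      refine (Finset.ssubset_iff_of_subset (dcl_mono (Finset.erase_subset s₀ S))).mpr
        ⟨s₀, mem_dcl.mpr ⟨s₀, hs₀, hrefl s₀⟩, fun hmem => ?_⟩
      obtain ⟨j, hj, hsj⟩ := mem_dcl.mp hmem
      obtain ⟨hjne, hjS⟩ := Finset.mem_erase.mp hj
      exact hjne (hanti s₀ hs₀ j hjS hsj).symm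
  · exfalso
    obtain ⟨x, y, z, h1, h2, h3, h4, h5, h6⟩ :=
      exists_violation le hrefl hantisymm htrans hnh
    exact no_violation le hrefl hantisymm htrans noex x y z h1 h2 h3 h4 h5 h6

lemma weight_eq {R : Type*} [Zero R] (le : Fin n → Fin n → Prop)
    (w : Fin n → R) (T : Finset (Fin n)) (h : ∀ j, w j ≠ 0 ↔ j ∈ T) :
    posetWeight le w = (dcl le T).card := by
  have hset : {k : Fin n | ∃ j : Fin n, w j ≠ 0 ∧ le k j} = ↑(dcl le T) := by
    ext k
    simp only [Set.mem_setOf_eq, Finset.coe_filter, dcl, Finset.mem_coe,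
      Finset.mem_filter, Finset.mem_univ, true_and]
    constructor
    · rintro ⟨j, hj0, hkj⟩; exact ⟨j, (h j).mp hj0, hkj⟩
    · rintro ⟨j, hjT, hkj⟩; exact ⟨j, (h j).mpr hjT, hkj⟩
  rw [posetWeight, hset, Set.ncard_coe_finset]

end Aux

/-- **Non-hierarchical posets fail the MacWilliams extension theorem.**  Let `R` be a
finite Frobenius ring with `1 ≠ 0` and `P = ([n],≤)` a poset that is not hierarchical.
Then there are codes `C, C' ⊆ R^n` and a `wt_P`-preserving left `R`-linear isomorphism
`f : C → C'` that cannot be extended to a `wt_P`-preserving `R`-linear bijection of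
`R^n`. -/
theorem non_hierarchical_no_extension
    {R : Type*} [Ring R] [Fintype R] [Nontrivial R] (hR : IsFrobeniusRing R)
    {n : ℕ} (le : Fin n → Fin n → Prop)
    (hrefl : ∀ a, le a a)
    (hantisymm : ∀ a b, le a b → le b a → a = b)
    (htrans : ∀ a b c, le a b → le b c → le a c)
    (hnh : ¬ IsHierarchical le) :
    ∃ (C C' : Submodule R (Fin n → R)) (f : C ≃ₗ[R] C'),
      (∀ x : C, posetWeight le (f x : Fin n → R) = posetWeight le (x : Fin n → R)) ∧
      ¬ ∃ g : (Fin n → R) ≃ₗ[R] (Fin n → R),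
          (∀ v : Fin n → R, posetWeight le (g v) = posetWeight le v) ∧
          ∀ x : C, g (x : Fin n → R) = (f x : Fin n → R) := by
  classical
  obtain ⟨c, s₀, S, hs₀S, hceq, hlt1, hlt2⟩ :=
    exists_config le hrefl hantisymm htrans hnh
  set uu : Fin n → R := fun k => if k ∈ S then (1 : R) else 0 with huu
  set vv : Fin n → R := fun k => if k = c then (1 : R) else 0 with hvv
  set φu : R →ₗ[R] (Fin n → R) := LinearMap.toSpanSingleton R (Fin n → R) uu with hφu
  set φv : R →ₗ[R] (Fin n → R) := LinearMap.toSpanSingleton R (Fin n → R) vv with hφv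
  have hφu_apply : ∀ r : R, ∀ j, φu r j = if j ∈ S then r else 0 := by
    intro r j
    simp only [hφu, LinearMap.toSpanSingleton_apply, Pi.smul_apply, huu, smul_eq_mul]
    by_cases hj : j ∈ S <;> simp [hj]
  have hφv_apply : ∀ r : R, ∀ j, φv r j = if j = c then r else 0 := by
    intro r j
    simp only [hφv, LinearMap.toSpanSingleton_apply, Pi.smul_apply, hvv, smul_eq_mul]
    by_cases hj : j = c <;> simp [hj]
  have hinju : Function.Injective φu := by
    intro a b hab
    have h1 := congrFun hab s₀
    rw [hφu_apply, hφu_apply, if_pos hs₀S, if_pos hs₀S] at h1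
    exact h1
  have hinjv : Function.Injective φv := by
    intro a b hab
    have h1 := congrFun hab c
    rw [hφv_apply, hφv_apply, if_pos rfl, if_pos rfl] at h1
    exact h1
  set e₁ := LinearEquiv.ofInjective φu hinju with he₁
  set e₂ := LinearEquiv.ofInjective φv hinjv with he₂
  have hwu : ∀ r : R, r ≠ 0 → posetWeight le (φu r) = (dcl le S).card := by
    intro r hr
    apply weight_eq
    intro j
    rw [hφu_apply]
    by_cases hj : j ∈ S <;> simp [hj, hr]
  have hwv : ∀ r : R, r ≠ 0 → posetWeight le (φv r) = (dwn le c).card := by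
    intro r hr
    rw [← dcl_singleton (le := le) (c := c)]
    apply weight_eq
    intro j
    rw [hφv_apply]
    by_cases hj : j = c <;> simp [hj, hr]
  refine ⟨LinearMap.range φu, LinearMap.range φv, e₁.symm.trans e₂, ?_, ?_⟩
  · rintro ⟨x, hx⟩
    obtain ⟨r, rfl⟩ := hx
    have hxe : (⟨φu r, ⟨r, rfl⟩⟩ : LinearMap.range φu) = e₁ r :=
      Subtype.ext (LinearEquiv.ofInjective_apply φu r).symm
    have hfx : (((e₁.symm.trans e₂) ⟨φu r, ⟨r, rfl⟩⟩ : LinearMap.range φv) : Fin n → R)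
        = φv r := by
      rw [hxe, LinearEquiv.trans_apply, LinearEquiv.symm_apply_apply]
      exact LinearEquiv.ofInjective_apply φv r
    show posetWeight le (((e₁.symm.trans e₂) ⟨φu r, ⟨r, rfl⟩⟩ : LinearMap.range φv) : Fin n → R)
        = posetWeight le (φu r)
    rw [hfx]
    rcases eq_or_ne r 0 with rfl | hr0
    · rw [map_zero, map_zero]
    · rw [hwu r hr0, hwv r hr0, hceq]
  · rintro ⟨g, hgw, hgext⟩
    have hgu : g uu = vv := by
      have h1 := hgext (e₁ 1)
      have hc1 : ((e₁ 1 : LinearMap.range φu) : Fin n → R) = uu := by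
        rw [he₁, LinearEquiv.ofInjective_apply, hφu, LinearMap.toSpanSingleton_apply, one_smul]
      have hc2 : (((e₁.symm.trans e₂) (e₁ 1) : LinearMap.range φv) : Fin n → R) = vv := by
        rw [LinearEquiv.trans_apply, LinearEquiv.symm_apply_apply, he₂,
          LinearEquiv.ofInjective_apply, hφv, LinearMap.toSpanSingleton_apply, one_smul]
      rw [hc1, hc2] at h1
      exact h1
    set zz : Fin n → R := fun k => if k = s₀ then (1 : R) else 0 with hzz
    have hwz : posetWeight le zz = (dwn le s₀).card := by
      rw [← dcl_singleton (le := le) (c := s₀)]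
      apply weight_eq
      intro j
      rcases eq_or_ne j s₀ with rfl | hj
      · simp [hzz]
      · simp [hzz, hj]
    have hwzu : posetWeight le (zz - uu) = (dcl le (S.erase s₀)).card := by
      apply weight_eq
      intro j
      rcases eq_or_ne j s₀ with rfl | hj1
      · simp [hzz, huu, hs₀S]
      · by_cases hj2 : j ∈ S <;> simp [hzz, huu, hj1, hj2, sub_eq_zero]
    have hkey : ∀ y : Fin n → R, posetWeight le y < (dwn le c).card → y c = 0 := by
      intro y hy
      by_contra hyc
      have hsub : (↑(dwn le c) : Set (Fin n)) ⊆ {k : Fin n | ∃ j : Fin n, y j ≠ 0 ∧ le k j} := by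
        intro k hk
        exact ⟨c, hyc, mem_dwn.mp (Finset.mem_coe.mp hk)⟩
      have hle2 := Set.ncard_le_ncard hsub (Set.toFinite _)
      rw [Set.ncard_coe_finset] at hle2
      have : posetWeight le y = Set.ncard {k : Fin n | ∃ j : Fin n, y j ≠ 0 ∧ le k j} := rfl
      omega
    have h1 : g zz c = 0 := by
      apply hkey
      rw [hgw zz, hwz]
      exact hlt1
    have h2 : (g zz - vv) c = 0 := by
      apply hkey
      have hsub : g (zz - uu) = g zz - vv := by rw [map_sub, hgu]
      rw [← hsub, hgw, hwzu]
      exact hlt2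
    rw [Pi.sub_apply, h1, hvv] at h2
    simp at h2
end
end
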